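/- arXiv:2303.12602 — 10 statements merged into one kernel-verified Lean document; each statement's English description precedes it below -/
import Mathlib

section
/- Assume u, v ∈ ℂ satisfy ¬(u = 0 ∧ v = 0), ¬(u = 1 ∧ v = 1) and ¬(u = λ ∧ v = t) (these conditions say that the normalized quasiparabolic bundle is stable for the central weight μ_c = (1/2,…,1/2)). Then θ1 and θ2 are parabolic Higgs fields for the normalized parabolic directions, they are linearly independent over ℂ, and every parabolic Higgs field for the normalized parabolic directions can be written uniquely as c1·θ1 + c2·θ2 with c1, c2 ∈ ℂ. -/
noncomputable section

open Polynomial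

abbrev K : Type := RatFunc ℂ

def Xr : K := RatFunc.X

def Cc (a : ℂ) : K := RatFunc.C a

/-- q = X(X-1)(X-λ)(X-t) -/
def q (lm tm : ℂ) : Polynomial ℂ :=
  Polynomial.X * (Polynomial.X - Polynomial.C 1) * (Polynomial.X - Polynomial.C lm) *
    (Polynomial.X - Polynomial.C tm)

def toK : Polynomial ℂ →+* K := algebraMap (Polynomial ℂ) K

def IsReg (lm tm : ℂ) (r : K) : Prop :=
  ∃ p : Polynomial ℂ, p.degree ≤ 3 ∧ toK (q lm tm) * r = toK p

def higgsMat (a b c : K) : Matrix (Fin 2) (Fin 2) K := !![a, b; c, -a]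

def IsRatHiggs (lm tm : ℂ) (a b c : K) : Prop :=
  IsReg lm tm a ∧ IsReg lm tm b ∧ IsReg lm tm c

def evalAt (p : ℂ) (r : K) : ℂ := RatFunc.eval (RingHom.id ℂ) p r

def resFin (p : ℂ) (M : Matrix (Fin 2) (Fin 2) K) : Matrix (Fin 2) (Fin 2) ℂ :=
  Matrix.of fun i j => evalAt p ((Xr - Cc p) * M i j)

def coeff3 (lm tm : ℂ) (r : K) : ℂ := ((toK (q lm tm) * r).num).coeff 3

def resInf (lm tm : ℂ) (M : Matrix (Fin 2) (Fin 2) K) : Matrix (Fin 2) (Fin 2) ℂ :=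
  -(Matrix.of fun i j => coeff3 lm tm (M i j))

def line (a b : ℂ) : Submodule ℂ (Fin 2 → ℂ) := Submodule.span ℂ {![a, b]}

def NilOn (R : Matrix (Fin 2) (Fin 2) ℂ) (L : Submodule ℂ (Fin 2 → ℂ)) : Prop :=
  (∀ v ∈ L, R.mulVec v = 0) ∧ (∀ v, R.mulVec v ∈ L)

def IsParabolic (lm tm : ℂ) (M : Matrix (Fin 2) (Fin 2) K)
    (l0 l1 ll lt li : Submodule ℂ (Fin 2 → ℂ)) : Prop :=
  NilOn (resFin 0 M) l0 ∧ NilOn (resFin 1 M) l1 ∧ NilOn (resFin lm M) ll ∧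
  NilOn (resFin tm M) lt ∧ NilOn (resInf lm tm M) li

/-- a/(X - p) -/
def frac (a p : ℂ) : K := Cc a / (Xr - Cc p)

def α1 (lm u : ℂ) : K := frac u lm - frac u 1
def β1 (lm u : ℂ) : K := frac u 1 - frac 1 lm + frac (1 - u) 0
def γ1 (lm u : ℂ) : K := frac (u ^ 2) lm - frac u 1
def θ1 (lm u : ℂ) : Matrix (Fin 2) (Fin 2) K := higgsMat (α1 lm u) (β1 lm u) (γ1 lm u)

def α2 (tm v : ℂ) : K := frac v tm - frac v 1
def β2 (tm v : ℂ) : K := frac v 1 - frac 1 tm + frac (1 - v) 0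
def γ2 (tm v : ℂ) : K := frac (v ^ 2) tm - frac v 1
def θ2 (tm v : ℂ) : Matrix (Fin 2) (Fin 2) K := higgsMat (α2 tm v) (β2 tm v) (γ2 tm v)

-- Auxiliary lemmas
lemma Cc_toK (a : ℂ) : Cc a = toK (Polynomial.C a) := (RatFunc.algebraMap_C a).symm

lemma Xr_toK : Xr = toK Polynomial.X := (RatFunc.algebraMap_X).symm

lemma toK_inj : Function.Injective toK := RatFunc.algebraMap_injective ℂ

lemma toK_ne_zero {f : Polynomial ℂ} (hf : f ≠ 0) : toK f ≠ 0 :=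
  RatFunc.algebraMap_ne_zero hf

lemma evalAt_toK (p : ℂ) (f : Polynomial ℂ) : evalAt p (toK f) = f.eval p := by
  unfold evalAt toK
  rw [RatFunc.eval_algebraMap]
  rfl

lemma evalAt_of_mul (p : ℂ) {g f : Polynomial ℂ} {r : K} (hg : g.eval p ≠ 0)
    (h : toK g * r = toK f) : evalAt p r = f.eval p / g.eval p := by
  have hg0 : g ≠ 0 := fun h0 => hg (by simp [h0])
  have hKg : toK g ≠ 0 := toK_ne_zero hg0
  have hr : r = toK f / toK g := by
    rw [eq_div_iff hKg, mul_comm]; exact h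
  have hdvd : r.denom ∣ g := (RatFunc.denom_dvd hg0).mpr ⟨f, hr⟩
  have hde : Polynomial.eval₂ (RingHom.id ℂ) p r.denom ≠ 0 := by
    obtain ⟨e, he⟩ := hdvd
    intro h0
    apply hg
    rw [he, Polynomial.eval_mul]
    simp only [Polynomial.eval] at h0 ⊢
    rw [h0, zero_mul]
  have hx : Polynomial.eval₂ (RingHom.id ℂ) p (RatFunc.denom (toK g)) ≠ 0 := by
    rw [show toK g = algebraMap (Polynomial ℂ) K g from rfl, RatFunc.denom_algebraMap]
    simp
  have hmul := RatFunc.eval_mul (f := RingHom.id ℂ) (a := p) hx hde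
  rw [h] at hmul
  have h1 : evalAt p (toK f) = evalAt p (toK g) * evalAt p r := hmul
  rw [evalAt_toK, evalAt_toK] at h1
  rw [eq_div_iff hg]
  linear_combination -h1

lemma coeff3_of_mul {lm tm : ℂ} {A : Polynomial ℂ} {r : K}
    (h : toK (q lm tm) * r = toK A) : coeff3 lm tm r = A.coeff 3 := by
  unfold coeff3
  rw [h, show toK A = algebraMap (Polynomial ℂ) K A from rfl, RatFunc.num_algebraMap]

lemma toK_mul_frac {g gp : Polynomial ℂ} {p : ℂ}
    (hfac : g = (Polynomial.X - Polynomial.C p) * gp) (a : ℂ) :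
    toK g * frac a p = toK (Polynomial.C a * gp) := by
  have hne : toK (Polynomial.X - Polynomial.C p) ≠ 0 :=
    toK_ne_zero (Polynomial.X_sub_C_ne_zero p)
  rw [hfac, frac, Cc_toK, Cc_toK, Xr_toK, ← map_sub, map_mul, map_mul]
  field_simp
lemma mulVec_two (R : Matrix (Fin 2) (Fin 2) ℂ) (x : Fin 2 → ℂ) :
    R.mulVec x = ![R 0 0 * x 0 + R 0 1 * x 1, R 1 0 * x 0 + R 1 1 * x 1] := by
  funext i
  fin_cases i <;> simp [Matrix.mulVec, dotProduct, Fin.sum_univ_two]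

lemma nilOn_line_iff (R : Matrix (Fin 2) (Fin 2) ℂ) (w : ℂ) :
    NilOn R (line 1 w) ↔
      (R 0 0 + w * R 0 1 = 0 ∧ R 1 0 + w * R 1 1 = 0 ∧
       R 1 0 = w * R 0 0 ∧ R 1 1 = w * R 0 1) := by
  constructor
  · rintro ⟨h1, h2⟩
    have hv : (![1, w] : Fin 2 → ℂ) ∈ line 1 w := Submodule.mem_span_singleton_self _
    have e1 := h1 _ hv
    rw [mulVec_two] at e1
    have e10 := congrFun e1 0
    have e11 := congrFun e1 1
    simp at e10 e11
    have e2 := h2 ![1, 0]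
    have e3 := h2 ![0, 1]
    rw [line, Submodule.mem_span_singleton, mulVec_two] at e2 e3
    obtain ⟨c2, hc2⟩ := e2
    obtain ⟨c3, hc3⟩ := e3
    have f20 := congrFun hc2 0
    have f21 := congrFun hc2 1
    have f30 := congrFun hc3 0
    have f31 := congrFun hc3 1
    simp at f20 f21 f30 f31
    refine ⟨by linear_combination e10, by linear_combination e11, ?_, ?_⟩
    · rw [← f21, ← f20]; ring
    · rw [← f31, ← f30]; ring
  · rintro ⟨e1, e2, e3, e4⟩
    constructor
    · intro x hx
      rw [line, Submodule.mem_span_singleton] at hx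
      obtain ⟨c, rfl⟩ := hx
      rw [mulVec_two]
      funext i
      fin_cases i
      · simp
        linear_combination c * e1
      · simp
        linear_combination c * e2
    · intro x
      rw [line, Submodule.mem_span_singleton, mulVec_two]
      refine ⟨R 0 0 * x 0 + R 0 1 * x 1, ?_⟩
      funext i
      fin_cases i
      · simp
      · simp
        rw [e3, e4]; ring

lemma nilOn_line01_iff (R : Matrix (Fin 2) (Fin 2) ℂ) :
    NilOn R (line 0 1) ↔ (R 0 0 = 0 ∧ R 0 1 = 0 ∧ R 1 1 = 0) := by
  constructor
  · rintro ⟨h1, h2⟩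
    have hv : (![0, 1] : Fin 2 → ℂ) ∈ line 0 1 := Submodule.mem_span_singleton_self _
    have e1 := h1 _ hv
    rw [mulVec_two] at e1
    have e10 := congrFun e1 0
    have e11 := congrFun e1 1
    simp at e10 e11
    have e2 := h2 ![1, 0]
    rw [line, Submodule.mem_span_singleton, mulVec_two] at e2
    obtain ⟨c2, hc2⟩ := e2
    have f20 := congrFun hc2 0
    simp at f20
    exact ⟨f20.symm, e10, e11⟩
  · rintro ⟨e1, e2, e3⟩
    constructor
    · intro x hx
      rw [line, Submodule.mem_span_singleton] at hx
      obtain ⟨c, rfl⟩ := hx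
      rw [mulVec_two]
      funext i
      fin_cases i <;> simp [e1, e2, e3]
    · intro x
      rw [line, Submodule.mem_span_singleton, mulVec_two]
      refine ⟨R 1 0 * x 0 + R 1 1 * x 1, ?_⟩
      funext i
      fin_cases i <;> simp [e1, e2]

lemma nilOn_smul_iff (R : Matrix (Fin 2) (Fin 2) ℂ) {s : ℂ} (hs : s ≠ 0)
    (L : Submodule ℂ (Fin 2 → ℂ)) : NilOn (s • R) L ↔ NilOn R L := by
  have key : ∀ x, (s • R).mulVec x = s • R.mulVec x := by
    intro x; rw [Matrix.smul_mulVec]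
  constructor
  · rintro ⟨h1, h2⟩
    constructor
    · intro x hx
      have := h1 x hx
      rw [key] at this
      exact (smul_eq_zero.mp this).resolve_left hs
    · intro x
      have := h2 x
      rw [key] at this
      have h' := L.smul_mem s⁻¹ this
      rwa [smul_smul, inv_mul_cancel₀ hs, one_smul] at h'
  · rintro ⟨h1, h2⟩
    refine ⟨fun x hx => by rw [key, h1 x hx, smul_zero], fun x => by
      rw [key]; exact L.smul_mem s (h2 x)⟩
lemma evalAt_res (lm tm p : ℂ) {gp : Polynomial ℂ}
    (hfac : q lm tm = (Polynomial.X - Polynomial.C p) * gp) (hg : gp.eval p ≠ 0)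
    {r : K} {A : Polynomial ℂ} (h : toK (q lm tm) * r = toK A) :
    evalAt p ((Xr - Cc p) * r) = A.eval p / gp.eval p := by
  apply evalAt_of_mul p hg
  rw [Xr_toK, Cc_toK, ← map_sub, ← mul_assoc, ← map_mul]
  rw [show gp * (Polynomial.X - Polynomial.C p) = q lm tm by rw [hfac]; ring]
  exact h

lemma resFin_higgs (lm tm p : ℂ) {gp : Polynomial ℂ}
    (hfac : q lm tm = (Polynomial.X - Polynomial.C p) * gp) (hg : gp.eval p ≠ 0)
    {a b c : K} {A B C : Polynomial ℂ}
    (ha : toK (q lm tm) * a = toK A) (hb : toK (q lm tm) * b = toK B)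
    (hc : toK (q lm tm) * c = toK C) :
    resFin p (higgsMat a b c) =
      (gp.eval p)⁻¹ • !![A.eval p, B.eval p; C.eval p, -(A.eval p)] := by
  have hna : toK (q lm tm) * (-a) = toK (-A) := by rw [map_neg, mul_neg, ha]
  have h11 : evalAt p (-((Xr - Cc p) * a)) = (-A).eval p / gp.eval p := by
    rw [show -((Xr - Cc p) * a) = (Xr - Cc p) * -a by ring, evalAt_res lm tm p hfac hg hna]
  ext i j
  fin_cases i <;> fin_cases j <;>
    simp [resFin, higgsMat, evalAt_res lm tm p hfac hg ha, evalAt_res lm tm p hfac hg hb,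
      evalAt_res lm tm p hfac hg hc, h11, div_eq_inv_mul]

lemma nilOn_resFin_iff (lm tm p w : ℂ) {gp : Polynomial ℂ}
    (hfac : q lm tm = (Polynomial.X - Polynomial.C p) * gp) (hg : gp.eval p ≠ 0)
    {a b c : K} {A B C : Polynomial ℂ}
    (ha : toK (q lm tm) * a = toK A) (hb : toK (q lm tm) * b = toK B)
    (hc : toK (q lm tm) * c = toK C) :
    NilOn (resFin p (higgsMat a b c)) (line 1 w) ↔
      (A.eval p + w * B.eval p = 0 ∧ C.eval p = w * A.eval p) := by
  rw [resFin_higgs lm tm p hfac hg ha hb hc, nilOn_smul_iff _ (inv_ne_zero hg),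
    nilOn_line_iff]
  simp only [Matrix.of_apply, Matrix.cons_val', Matrix.cons_val_zero, Matrix.cons_val_one,
    Matrix.head_cons, Matrix.empty_val', Matrix.cons_val_fin_one, Matrix.head_fin_const,
    Fin.isValue]
  constructor
  · rintro ⟨h1, _, h3, _⟩
    exact ⟨h1, h3⟩
  · rintro ⟨h1, h2⟩
    exact ⟨h1, by linear_combination h2, h2, by linear_combination -h1⟩

lemma nilOn_resInf_iff (lm tm : ℂ) {a b c : K} {A B C : Polynomial ℂ}
    (ha : toK (q lm tm) * a = toK A) (hb : toK (q lm tm) * b = toK B)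
    (hc : toK (q lm tm) * c = toK C) :
    NilOn (resInf lm tm (higgsMat a b c)) (line 0 1) ↔
      (A.coeff 3 = 0 ∧ B.coeff 3 = 0) := by
  have hna : toK (q lm tm) * (-a) = toK (-A) := by rw [map_neg, mul_neg, ha]
  have hres : resInf lm tm (higgsMat a b c) =
      (-1 : ℂ) • !![A.coeff 3, B.coeff 3; C.coeff 3, -(A.coeff 3)] := by
    ext i j
    fin_cases i <;> fin_cases j <;>
      simp [resInf, higgsMat, coeff3_of_mul ha, coeff3_of_mul hb, coeff3_of_mul hc,
        coeff3_of_mul hna]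
  rw [hres, nilOn_smul_iff _ (by norm_num), nilOn_line01_iff]
  simp only [Matrix.of_apply, Matrix.cons_val', Matrix.cons_val_zero, Matrix.cons_val_one,
    Matrix.head_cons, Matrix.empty_val', Matrix.cons_val_fin_one, Matrix.head_fin_const,
    Fin.isValue]
  constructor
  · rintro ⟨h1, h2, _⟩
    exact ⟨h1, h2⟩
  · rintro ⟨h1, h2⟩
    exact ⟨h1, h2, by rw [h1]; ring⟩
open Polynomial in
def q0p (lm tm : ℂ) : Polynomial ℂ := (X - C 1) * (X - C lm) * (X - C tm)
open Polynomial in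
def q1p (lm tm : ℂ) : Polynomial ℂ := X * (X - C lm) * (X - C tm)
open Polynomial in
def qlp (lm tm : ℂ) : Polynomial ℂ := X * (X - C 1) * (X - C tm)
open Polynomial in
def qtp (lm tm : ℂ) : Polynomial ℂ := X * (X - C 1) * (X - C lm)

lemma hfac0 (lm tm : ℂ) : q lm tm = (Polynomial.X - Polynomial.C (0:ℂ)) * q0p lm tm := by
  unfold q q0p; simp only [map_zero, sub_zero]; ring

lemma hfac1 (lm tm : ℂ) : q lm tm = (Polynomial.X - Polynomial.C (1:ℂ)) * q1p lm tm := by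
  unfold q q1p; ring

lemma hfacl (lm tm : ℂ) : q lm tm = (Polynomial.X - Polynomial.C lm) * qlp lm tm := by
  unfold q qlp; ring

lemma hfact (lm tm : ℂ) : q lm tm = (Polynomial.X - Polynomial.C tm) * qtp lm tm := by
  unfold q qtp; ring

lemma ev_q0p (lm tm : ℂ) : (q0p lm tm).eval 0 = -(lm * tm) := by simp [q0p]; try ring
lemma ev_q1p (lm tm : ℂ) : (q1p lm tm).eval 1 = (1 - lm) * (1 - tm) := by simp [q1p]; try ring
lemma ev_qlp (lm tm : ℂ) : (qlp lm tm).eval lm = lm * (lm - 1) * (lm - tm) := by simp [qlp]; try ring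
lemma ev_qtp (lm tm : ℂ) : (qtp lm tm).eval tm = tm * (tm - 1) * (tm - lm) := by simp [qtp]; try ring

-- the polynomials q·α1 etc., in expanded form
open Polynomial in
def pA1 (lm tm u : ℂ) : Polynomial ℂ :=
  C (u * lm - u) * X ^ 2 + C (u * tm - u * lm * tm) * X
open Polynomial in
def pB1 (lm tm u : ℂ) : Polynomial ℂ :=
  C (u - lm) * X ^ 2 + C (lm + lm * tm - u * lm - u * tm) * X + C ((u - 1) * (lm * tm))
open Polynomial in
def pC1 (lm tm u : ℂ) : Polynomial ℂ :=
  C (u ^ 2 - u) * X ^ 3 + C (u * lm + u * tm - u ^ 2 - u ^ 2 * tm) * X ^ 2 +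
    C (u ^ 2 * tm - u * lm * tm) * X
open Polynomial in
def pA2 (lm tm v : ℂ) : Polynomial ℂ :=
  C (v * tm - v) * X ^ 2 + C (v * lm - v * lm * tm) * X
open Polynomial in
def pB2 (lm tm v : ℂ) : Polynomial ℂ :=
  C (v - tm) * X ^ 2 + C (tm + lm * tm - v * tm - v * lm) * X + C ((v - 1) * (lm * tm))
open Polynomial in
def pC2 (lm tm v : ℂ) : Polynomial ℂ :=
  C (v ^ 2 - v) * X ^ 3 + C (v * lm + v * tm - v ^ 2 - v ^ 2 * lm) * X ^ 2 +
    C (v ^ 2 * lm - v * lm * tm) * X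

lemma rep_a1 (lm tm u : ℂ) : toK (q lm tm) * α1 lm u = toK (pA1 lm tm u) := by
  unfold α1
  rw [mul_sub, toK_mul_frac (hfacl lm tm), toK_mul_frac (hfac1 lm tm), ← map_sub]
  apply congrArg
  unfold qlp q1p pA1
  simp only [map_sub, map_mul, map_one, map_pow]
  ring

lemma rep_b1 (lm tm u : ℂ) : toK (q lm tm) * β1 lm u = toK (pB1 lm tm u) := by
  unfold β1
  rw [mul_add, mul_sub, toK_mul_frac (hfac1 lm tm), toK_mul_frac (hfacl lm tm),
    toK_mul_frac (hfac0 lm tm), ← map_sub, ← map_add]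
  apply congrArg
  unfold q1p qlp q0p pB1
  simp only [map_sub, map_mul, map_one, map_add, map_pow]
  ring

lemma rep_c1 (lm tm u : ℂ) : toK (q lm tm) * γ1 lm u = toK (pC1 lm tm u) := by
  unfold γ1
  rw [mul_sub, toK_mul_frac (hfacl lm tm), toK_mul_frac (hfac1 lm tm), ← map_sub]
  apply congrArg
  unfold qlp q1p pC1
  simp only [map_sub, map_mul, map_one, map_pow, map_add]
  ring

lemma rep_a2 (lm tm v : ℂ) : toK (q lm tm) * α2 tm v = toK (pA2 lm tm v) := by
  unfold α2
  rw [mul_sub, toK_mul_frac (hfact lm tm), toK_mul_frac (hfac1 lm tm), ← map_sub]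
  apply congrArg
  unfold qtp q1p pA2
  simp only [map_sub, map_mul, map_one, map_pow]
  ring

lemma rep_b2 (lm tm v : ℂ) : toK (q lm tm) * β2 tm v = toK (pB2 lm tm v) := by
  unfold β2
  rw [mul_add, mul_sub, toK_mul_frac (hfac1 lm tm), toK_mul_frac (hfact lm tm),
    toK_mul_frac (hfac0 lm tm), ← map_sub, ← map_add]
  apply congrArg
  unfold q1p qtp q0p pB2
  simp only [map_sub, map_mul, map_one, map_add, map_pow]
  ring

lemma rep_c2 (lm tm v : ℂ) : toK (q lm tm) * γ2 tm v = toK (pC2 lm tm v) := by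
  unfold γ2
  rw [mul_sub, toK_mul_frac (hfact lm tm), toK_mul_frac (hfac1 lm tm), ← map_sub]
  apply congrArg
  unfold qtp q1p pC2
  simp only [map_sub, map_mul, map_one, map_pow, map_add]
  ring

lemma deg_pA1 (lm tm u : ℂ) : (pA1 lm tm u).degree ≤ 3 := by
  unfold pA1; compute_degree!
lemma deg_pB1 (lm tm u : ℂ) : (pB1 lm tm u).degree ≤ 3 := by
  unfold pB1; compute_degree!
lemma deg_pC1 (lm tm u : ℂ) : (pC1 lm tm u).degree ≤ 3 := by
  unfold pC1; compute_degree!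
lemma deg_pA2 (lm tm v : ℂ) : (pA2 lm tm v).degree ≤ 3 := by
  unfold pA2; compute_degree!
lemma deg_pB2 (lm tm v : ℂ) : (pB2 lm tm v).degree ≤ 3 := by
  unfold pB2; compute_degree!
lemma deg_pC2 (lm tm v : ℂ) : (pC2 lm tm v).degree ≤ 3 := by
  unfold pC2; compute_degree!
def Conds (lm tm u v : ℂ) (A B C : Polynomial ℂ) : Prop :=
  (A.eval 0 + 0 * B.eval 0 = 0 ∧ C.eval 0 = 0 * A.eval 0) ∧
  (A.eval 1 + 1 * B.eval 1 = 0 ∧ C.eval 1 = 1 * A.eval 1) ∧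
  (A.eval lm + u * B.eval lm = 0 ∧ C.eval lm = u * A.eval lm) ∧
  (A.eval tm + v * B.eval tm = 0 ∧ C.eval tm = v * A.eval tm) ∧
  (A.coeff 3 = 0 ∧ B.coeff 3 = 0)

lemma parab_iff (lm tm : ℂ) (hl0 : lm ≠ 0) (hl1 : lm ≠ 1) (ht0 : tm ≠ 0) (ht1 : tm ≠ 1)
    (hlt : lm ≠ tm) (u v : ℂ) {a b c : K} {A B C : Polynomial ℂ}
    (ha : toK (q lm tm) * a = toK A) (hb : toK (q lm tm) * b = toK B)
    (hc : toK (q lm tm) * c = toK C) :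
    IsParabolic lm tm (higgsMat a b c) (line 1 0) (line 1 1) (line 1 u) (line 1 v)
      (line 0 1) ↔ Conds lm tm u v A B C := by
  have hg0 : (q0p lm tm).eval 0 ≠ 0 := by
    rw [ev_q0p]; exact neg_ne_zero.mpr (mul_ne_zero hl0 ht0)
  have hg1 : (q1p lm tm).eval 1 ≠ 0 := by
    rw [ev_q1p]
    exact mul_ne_zero (sub_ne_zero.mpr (Ne.symm hl1)) (sub_ne_zero.mpr (Ne.symm ht1))
  have hgl : (qlp lm tm).eval lm ≠ 0 := by
    rw [ev_qlp]
    exact mul_ne_zero (mul_ne_zero hl0 (sub_ne_zero.mpr hl1)) (sub_ne_zero.mpr hlt)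
  have hgt : (qtp lm tm).eval tm ≠ 0 := by
    rw [ev_qtp]
    exact mul_ne_zero (mul_ne_zero ht0 (sub_ne_zero.mpr ht1)) (sub_ne_zero.mpr (Ne.symm hlt))
  unfold IsParabolic Conds
  rw [nilOn_resFin_iff lm tm 0 0 (hfac0 lm tm) hg0 ha hb hc,
      nilOn_resFin_iff lm tm 1 1 (hfac1 lm tm) hg1 ha hb hc,
      nilOn_resFin_iff lm tm lm u (hfacl lm tm) hgl ha hb hc,
      nilOn_resFin_iff lm tm tm v (hfact lm tm) hgt ha hb hc,
      nilOn_resInf_iff lm tm ha hb hc]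

lemma conds1 (lm tm u v : ℂ) : Conds lm tm u v (pA1 lm tm u) (pB1 lm tm u) (pC1 lm tm u) := by
  unfold Conds pA1 pB1 pC1
  refine ⟨⟨?_, ?_⟩, ⟨?_, ?_⟩, ⟨?_, ?_⟩, ⟨?_, ?_⟩, ⟨?_, ?_⟩⟩ <;>
    simp only [Polynomial.eval_add, Polynomial.eval_sub, Polynomial.eval_mul,
      Polynomial.eval_pow, Polynomial.eval_X, Polynomial.eval_C, Polynomial.coeff_add,
      Polynomial.coeff_C_mul, Polynomial.coeff_X_pow, Polynomial.coeff_C, Polynomial.coeff_X] <;>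
    norm_num <;> try ring

lemma conds2 (lm tm u v : ℂ) : Conds lm tm u v (pA2 lm tm v) (pB2 lm tm v) (pC2 lm tm v) := by
  unfold Conds pA2 pB2 pC2
  refine ⟨⟨?_, ?_⟩, ⟨?_, ?_⟩, ⟨?_, ?_⟩, ⟨?_, ?_⟩, ⟨?_, ?_⟩⟩ <;>
    simp only [Polynomial.eval_add, Polynomial.eval_sub, Polynomial.eval_mul,
      Polynomial.eval_pow, Polynomial.eval_X, Polynomial.eval_C, Polynomial.coeff_add,
      Polynomial.coeff_C_mul, Polynomial.coeff_X_pow, Polynomial.coeff_C, Polynomial.coeff_X] <;>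
    norm_num <;> try ring

lemma evB1l (lm tm u : ℂ) : (pB1 lm tm u).eval lm = -(lm * (lm - 1) * (lm - tm)) := by
  simp [pB1]; ring
lemma evB1t (lm tm u : ℂ) : (pB1 lm tm u).eval tm = 0 := by
  simp [pB1]; ring
lemma evB2l (lm tm v : ℂ) : (pB2 lm tm v).eval lm = 0 := by
  simp [pB2]; ring
lemma evB2t (lm tm v : ℂ) : (pB2 lm tm v).eval tm = -(tm * (tm - 1) * (tm - lm)) := by
  simp [pB2]; ring

lemma deg_le_two {p : Polynomial ℂ} (h3 : p.degree ≤ 3) (hc : p.coeff 3 = 0) :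
    p.degree ≤ 2 := by
  rw [Polynomial.degree_le_iff_coeff_zero] at h3 ⊢
  intro m hm
  have hm' : 2 < m := by exact_mod_cast hm
  by_cases h : m = 3
  · rw [h]; exact hc
  · exact h3 m (by exact_mod_cast (by omega : 3 < m))

lemma eq_zero_three {p : Polynomial ℂ} (hdeg : p.degree ≤ 2) {x y z : ℂ}
    (hxy : x ≠ y) (hxz : x ≠ z) (hyz : y ≠ z)
    (hx : p.eval x = 0) (hy : p.eval y = 0) (hz : p.eval z = 0) : p = 0 := by
  apply Polynomial.eq_zero_of_natDegree_lt_card_of_eval_eq_zero' p {x, y, z}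
  · intro i hi
    simp only [Finset.mem_insert, Finset.mem_singleton] at hi
    rcases hi with rfl | rfl | rfl <;> assumption
  · have hcard : ({x, y, z} : Finset ℂ).card = 3 := by
      rw [Finset.card_insert_of_notMem (by simp [hxy, hxz]),
        Finset.card_insert_of_notMem (by simp [hyz]), Finset.card_singleton]
    have hnd : p.natDegree ≤ 2 := Polynomial.natDegree_le_iff_degree_le.mpr hdeg
    omega

lemma eq_zero_four {p : Polynomial ℂ} (hdeg : p.degree ≤ 3) {x y z w : ℂ}
    (hxy : x ≠ y) (hxz : x ≠ z) (hxw : x ≠ w) (hyz : y ≠ z) (hyw : y ≠ w) (hzw : z ≠ w)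
    (hx : p.eval x = 0) (hy : p.eval y = 0) (hz : p.eval z = 0) (hw : p.eval w = 0) :
    p = 0 := by
  apply Polynomial.eq_zero_of_natDegree_lt_card_of_eval_eq_zero' p {x, y, z, w}
  · intro i hi
    simp only [Finset.mem_insert, Finset.mem_singleton] at hi
    rcases hi with rfl | rfl | rfl | rfl <;> assumption
  · have hcard : ({x, y, z, w} : Finset ℂ).card = 4 := by
      rw [Finset.card_insert_of_notMem (by simp [hxy, hxz, hxw]),
        Finset.card_insert_of_notMem (by simp [hyz, hyw]),
        Finset.card_insert_of_notMem (by simp [hzw]), Finset.card_singleton]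
    have hnd : p.natDegree ≤ 3 := Polynomial.natDegree_le_iff_degree_le.mpr hdeg
    omega
lemma degComb {c1 c2 : ℂ} {p1 p2 : Polynomial ℂ} (h1 : p1.degree ≤ 3) (h2 : p2.degree ≤ 3) :
    (Polynomial.C c1 * p1 + Polynomial.C c2 * p2).degree ≤ 3 := by
  refine le_trans (Polynomial.degree_add_le _ _) (max_le ?_ ?_) <;>
    refine le_trans (Polynomial.degree_mul_le _ _) ?_
  · refine le_trans (add_le_add Polynomial.degree_C_le h1) ?_
    norm_num
  · refine le_trans (add_le_add Polynomial.degree_C_le h2) ?_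
    norm_num
lemma key_aux (lm tm : ℂ) (hl0 : lm ≠ 0) (hl1 : lm ≠ 1) (ht0 : tm ≠ 0) (ht1 : tm ≠ 1)
    (hlt : lm ≠ tm) (u v : ℂ) :
    ∀ y1 y2 : ℂ,
      Polynomial.C y1 * pB1 lm tm u + Polynomial.C y2 * pB2 lm tm v = 0 →
      y1 = 0 ∧ y2 = 0 := by
  have hd1 : lm * (lm - 1) * (lm - tm) ≠ 0 :=
    mul_ne_zero (mul_ne_zero hl0 (sub_ne_zero.mpr hl1)) (sub_ne_zero.mpr hlt)
  have hd2 : tm * (tm - 1) * (tm - lm) ≠ 0 :=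
    mul_ne_zero (mul_ne_zero ht0 (sub_ne_zero.mpr ht1)) (sub_ne_zero.mpr (Ne.symm hlt))
  intro y1 y2 h
  have el := congrArg (Polynomial.eval lm) h
  have et := congrArg (Polynomial.eval tm) h
  simp only [Polynomial.eval_add, Polynomial.eval_mul, Polynomial.eval_C,
    Polynomial.eval_zero, evB1l, evB1t, evB2l, evB2t] at el et
  constructor
  · have h1 : y1 * (lm * (lm - 1) * (lm - tm)) = 0 := by linear_combination -el
    exact (mul_eq_zero.mp h1).resolve_right hd1
  · have h2 : y2 * (tm * (tm - 1) * (tm - lm)) = 0 := by linear_combination -et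
    exact (mul_eq_zero.mp h2).resolve_right hd2

set_option maxHeartbeats 1000000 in
lemma li_aux (lm tm : ℂ) (hl0 : lm ≠ 0) (hl1 : lm ≠ 1) (ht0 : tm ≠ 0) (ht1 : tm ≠ 1)
    (hlt : lm ≠ tm) (u v : ℂ) :
    LinearIndependent ℂ ![θ1 lm u, θ2 tm v] := by
  have hd1 : lm * (lm - 1) * (lm - tm) ≠ 0 :=
    mul_ne_zero (mul_ne_zero hl0 (sub_ne_zero.mpr hl1)) (sub_ne_zero.mpr hlt)
  have hd2 : tm * (tm - 1) * (tm - lm) ≠ 0 :=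
    mul_ne_zero (mul_ne_zero ht0 (sub_ne_zero.mpr ht1)) (sub_ne_zero.mpr (Ne.symm hlt))
  have hsm : ∀ (s : ℂ) (x : K), s • x = Cc s * x := fun s x => RatFunc.smul_eq_C_mul s x
  rw [linearIndependent_fin2]
  constructor
  · intro h
    have h2 : θ2 tm v = 0 := by simpa using h
    have hb : β2 tm v = 0 := by
      have := congrFun (congrFun h2 0) 1
      simpa [θ2, higgsMat] using this
    have hz : toK (pB2 lm tm v) = 0 := by rw [← rep_b2, hb, mul_zero]
    have hp0 : pB2 lm tm v = 0 := toK_inj (by rw [hz, map_zero])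
    have hev := evB2t lm tm v
    rw [hp0] at hev
    simp only [Polynomial.eval_zero] at hev
    exact hd2 (by linear_combination hev)
  · intro s hs
    have hs' : s • θ2 tm v = θ1 lm u := by simpa using hs
    have hb : s • β2 tm v = β1 lm u := by
      have := congrFun (congrFun hs' 0) 1
      simpa [θ2, θ1, higgsMat, Matrix.smul_apply] using this
    have e2 : toK (Polynomial.C s * pB2 lm tm v) = toK (pB1 lm tm u) := by
      rw [map_mul, ← Cc_toK, ← rep_b2, ← rep_b1,
        show Cc s * (toK (q lm tm) * β2 tm v) = toK (q lm tm) * (Cc s * β2 tm v) by ring,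
        ← hsm, hb]
    have hpoly : Polynomial.C s * pB2 lm tm v = pB1 lm tm u := toK_inj e2
    have hev := congrArg (Polynomial.eval lm) hpoly
    simp only [Polynomial.eval_mul, Polynomial.eval_C, evB2l, evB1l] at hev
    exact hd1 (by linear_combination hev)

set_option maxHeartbeats 1000000 in
lemma uniq_aux (lm tm : ℂ) (hl0 : lm ≠ 0) (hl1 : lm ≠ 1) (ht0 : tm ≠ 0) (ht1 : tm ≠ 1)
    (hlt : lm ≠ tm) (u v : ℂ)
    (a b c : K) (A B C : Polynomial ℂ)
    (hdA : A.degree ≤ 3) (hdB : B.degree ≤ 3) (hdC : C.degree ≤ 3)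
    (hA : toK (q lm tm) * a = toK A) (hB : toK (q lm tm) * b = toK B)
    (hC : toK (q lm tm) * c = toK C)
    (hpar : IsParabolic lm tm (higgsMat a b c) (line 1 0) (line 1 1) (line 1 u) (line 1 v)
      (line 0 1)) :
    ∃! cc : ℂ × ℂ, higgsMat a b c = cc.1 • θ1 lm u + cc.2 • θ2 tm v := by
  have hd1 : lm * (lm - 1) * (lm - tm) ≠ 0 :=
    mul_ne_zero (mul_ne_zero hl0 (sub_ne_zero.mpr hl1)) (sub_ne_zero.mpr hlt)
  have hd2 : tm * (tm - 1) * (tm - lm) ≠ 0 :=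
    mul_ne_zero (mul_ne_zero ht0 (sub_ne_zero.mpr ht1)) (sub_ne_zero.mpr (Ne.symm hlt))
  have hqne : q lm tm ≠ 0 := by
    unfold q
    exact mul_ne_zero (mul_ne_zero (mul_ne_zero Polynomial.X_ne_zero
      (Polynomial.X_sub_C_ne_zero 1)) (Polynomial.X_sub_C_ne_zero lm))
      (Polynomial.X_sub_C_ne_zero tm)
  have hKq : toK (q lm tm) ≠ 0 := toK_ne_zero hqne
  have hsm : ∀ (s : ℂ) (x : K), s • x = Cc s * x := fun s x => RatFunc.smul_eq_C_mul s x
  have key := key_aux lm tm hl0 hl1 ht0 ht1 hlt u v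
  obtain ⟨⟨mA0, mC0⟩, ⟨mA1, mC1⟩, ⟨mAl, mCl⟩, ⟨mAt, mCt⟩, ⟨mA3, mB3⟩⟩ :=
    (parab_iff lm tm hl0 hl1 ht0 ht1 hlt u v hA hB hC).mp hpar
  obtain ⟨⟨aA0, aC0⟩, ⟨aA1, aC1⟩, ⟨aAl, aCl⟩, ⟨aAt, aCt⟩, ⟨aA3, aB3⟩⟩ := conds1 lm tm u v
  obtain ⟨⟨bA0, bC0⟩, ⟨bA1, bC1⟩, ⟨bAl, bCl⟩, ⟨bAt, bCt⟩, ⟨bA3, bB3⟩⟩ := conds2 lm tm u v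
  set c1 : ℂ := -(B.eval lm) / (lm * (lm - 1) * (lm - tm)) with hc1
  set c2 : ℂ := -(B.eval tm) / (tm * (tm - 1) * (tm - lm)) with hc2
  have SBl : B.eval lm - (c1 * (pB1 lm tm u).eval lm + c2 * (pB2 lm tm v).eval lm) = 0 := by
    rw [evB1l, evB2l, hc1]
    field_simp
    ring
  have SBt : B.eval tm - (c1 * (pB1 lm tm u).eval tm + c2 * (pB2 lm tm v).eval tm) = 0 := by
    rw [evB1t, evB2t, hc2]
    field_simp
    ring
  have hAzero : A - (Polynomial.C c1 * pA1 lm tm u + Polynomial.C c2 * pA2 lm tm v) = 0 := by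
    apply eq_zero_three ?_ (show (0:ℂ) ≠ lm from Ne.symm hl0) (show (0:ℂ) ≠ tm from Ne.symm ht0)
      hlt
    · simp only [Polynomial.eval_sub, Polynomial.eval_add, Polynomial.eval_mul,
        Polynomial.eval_C]
      linear_combination mA0 - c1 * aA0 - c2 * bA0
    · simp only [Polynomial.eval_sub, Polynomial.eval_add, Polynomial.eval_mul,
        Polynomial.eval_C]
      linear_combination mAl - c1 * aAl - c2 * bAl - u * SBl
    · simp only [Polynomial.eval_sub, Polynomial.eval_add, Polynomial.eval_mul,
        Polynomial.eval_C]
      linear_combination mAt - c1 * aAt - c2 * bAt - v * SBt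
    · apply deg_le_two
      · exact le_trans (Polynomial.degree_sub_le _ _)
          (max_le hdA (degComb (deg_pA1 lm tm u) (deg_pA2 lm tm v)))
      · simp only [Polynomial.coeff_sub, Polynomial.coeff_add, Polynomial.coeff_C_mul]
        rw [mA3, aA3, bA3]
        ring
  have SA : ∀ x : ℂ,
      A.eval x - (c1 * (pA1 lm tm u).eval x + c2 * (pA2 lm tm v).eval x) = 0 := by
    intro x
    have := congrArg (Polynomial.eval x) hAzero
    simpa [Polynomial.eval_sub, Polynomial.eval_add, Polynomial.eval_mul] using this
  have hBzero : B - (Polynomial.C c1 * pB1 lm tm u + Polynomial.C c2 * pB2 lm tm v) = 0 := by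
    apply eq_zero_three ?_ (show (1:ℂ) ≠ lm from Ne.symm hl1) (show (1:ℂ) ≠ tm from Ne.symm ht1)
      hlt
    · simp only [Polynomial.eval_sub, Polynomial.eval_add, Polynomial.eval_mul,
        Polynomial.eval_C]
      linear_combination mA1 - c1 * aA1 - c2 * bA1 - SA 1
    · simp only [Polynomial.eval_sub, Polynomial.eval_add, Polynomial.eval_mul,
        Polynomial.eval_C]
      linear_combination SBl
    · simp only [Polynomial.eval_sub, Polynomial.eval_add, Polynomial.eval_mul,
        Polynomial.eval_C]
      linear_combination SBt
    · apply deg_le_two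
      · exact le_trans (Polynomial.degree_sub_le _ _)
          (max_le hdB (degComb (deg_pB1 lm tm u) (deg_pB2 lm tm v)))
      · simp only [Polynomial.coeff_sub, Polynomial.coeff_add, Polynomial.coeff_C_mul]
        rw [mB3, aB3, bB3]
        ring
  have hCzero : C - (Polynomial.C c1 * pC1 lm tm u + Polynomial.C c2 * pC2 lm tm v) = 0 := by
    apply eq_zero_four ?_ (show (0:ℂ) ≠ 1 by norm_num) (show (0:ℂ) ≠ lm from Ne.symm hl0)
      (show (0:ℂ) ≠ tm from Ne.symm ht0) (show (1:ℂ) ≠ lm from Ne.symm hl1)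
      (show (1:ℂ) ≠ tm from Ne.symm ht1) hlt
    · simp only [Polynomial.eval_sub, Polynomial.eval_add, Polynomial.eval_mul,
        Polynomial.eval_C]
      linear_combination mC0 - c1 * aC0 - c2 * bC0
    · simp only [Polynomial.eval_sub, Polynomial.eval_add, Polynomial.eval_mul,
        Polynomial.eval_C]
      linear_combination mC1 - c1 * aC1 - c2 * bC1 + SA 1
    · simp only [Polynomial.eval_sub, Polynomial.eval_add, Polynomial.eval_mul,
        Polynomial.eval_C]
      linear_combination mCl - c1 * aCl - c2 * bCl + u * SA lm
    · simp only [Polynomial.eval_sub, Polynomial.eval_add, Polynomial.eval_mul,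
        Polynomial.eval_C]
      linear_combination mCt - c1 * aCt - c2 * bCt + v * SA tm
    · exact le_trans (Polynomial.degree_sub_le _ _)
        (max_le hdC (degComb (deg_pC1 lm tm u) (deg_pC2 lm tm v)))
  have sub_toK : ∀ (P P1 P2 : Polynomial ℂ) (r r1 r2 : K),
      toK (q lm tm) * r = toK P → toK (q lm tm) * r1 = toK P1 →
      toK (q lm tm) * r2 = toK P2 →
      P - (Polynomial.C c1 * P1 + Polynomial.C c2 * P2) = 0 →
      r = c1 • r1 + c2 • r2 := by
    intro P P1 P2 r r1 r2 h h1 h2 hz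
    apply mul_left_cancel₀ hKq
    rw [h, mul_add, hsm, hsm,
      show toK (q lm tm) * (Cc c1 * r1) = Cc c1 * (toK (q lm tm) * r1) by ring,
      show toK (q lm tm) * (Cc c2 * r2) = Cc c2 * (toK (q lm tm) * r2) by ring,
      h1, h2, Cc_toK, Cc_toK, ← map_mul, ← map_mul, ← map_add]
    exact congrArg toK (by linear_combination hz)
  have ea : a = c1 • α1 lm u + c2 • α2 tm v :=
    sub_toK A (pA1 lm tm u) (pA2 lm tm v) a (α1 lm u) (α2 tm v) hA (rep_a1 lm tm u)
      (rep_a2 lm tm v) hAzero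
  have eb : b = c1 • β1 lm u + c2 • β2 tm v :=
    sub_toK B (pB1 lm tm u) (pB2 lm tm v) b (β1 lm u) (β2 tm v) hB (rep_b1 lm tm u)
      (rep_b2 lm tm v) hBzero
  have ec : c = c1 • γ1 lm u + c2 • γ2 tm v :=
    sub_toK C (pC1 lm tm u) (pC2 lm tm v) c (γ1 lm u) (γ2 tm v) hC (rep_c1 lm tm u)
      (rep_c2 lm tm v) hCzero
  refine ⟨(c1, c2), ?_, ?_⟩
  · show higgsMat a b c = c1 • θ1 lm u + c2 • θ2 tm v
    ext i j
    fin_cases i <;> fin_cases j <;>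
      simp [higgsMat, θ1, θ2, Matrix.smul_apply, ea, eb, ec, smul_neg, neg_add] <;> try abel
  · rintro ⟨y1, y2⟩ hy
    simp only at hy
    have hbe : y1 • β1 lm u + y2 • β2 tm v = b := by
      have := congrFun (congrFun hy 0) 1
      simpa [higgsMat, θ1, θ2, Matrix.smul_apply] using this.symm
    have he : y1 • β1 lm u + y2 • β2 tm v = c1 • β1 lm u + c2 • β2 tm v := by
      rw [hbe, eb]
    rw [hsm, hsm, hsm, hsm] at he
    have hcomb :
        Polynomial.C (y1 - c1) * pB1 lm tm u + Polynomial.C (y2 - c2) * pB2 lm tm v = 0 := by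
      apply toK_inj
      rw [map_add, map_mul, map_mul, map_zero, ← Cc_toK, ← Cc_toK, ← rep_b1, ← rep_b2]
      calc Cc (y1 - c1) * (toK (q lm tm) * β1 lm u) +
            Cc (y2 - c2) * (toK (q lm tm) * β2 tm v)
          = toK (q lm tm) * ((Cc y1 * β1 lm u + Cc y2 * β2 tm v) -
              (Cc c1 * β1 lm u + Cc c2 * β2 tm v)) := by
            rw [show Cc (y1 - c1) = Cc y1 - Cc c1 from map_sub RatFunc.C _ _,
              show Cc (y2 - c2) = Cc y2 - Cc c2 from map_sub RatFunc.C _ _]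
            ring
        _ = 0 := by rw [he]; ring
    obtain ⟨hy1, hy2⟩ := key (y1 - c1) (y2 - c2) hcomb
    have h1 : y1 = c1 := by linear_combination hy1
    have h2 : y2 = c2 := by linear_combination hy2
    simp [Prod.ext_iff, h1, h2]
/-- For stable normalized parabolic directions, θ1 and θ2 are parabolic
Higgs fields, linearly independent over ℂ, and every parabolic Higgs field for these
directions is uniquely a ℂ-linear combination c1·θ1 + c2·θ2. -/
theorem stmt0 (lm tm : ℂ) (hl0 : lm ≠ 0) (hl1 : lm ≠ 1) (ht0 : tm ≠ 0) (ht1 : tm ≠ 1)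
    (hlt : lm ≠ tm) (u v : ℂ)
    (h00 : ¬(u = 0 ∧ v = 0)) (h11 : ¬(u = 1 ∧ v = 1)) (hst : ¬(u = lm ∧ v = tm)) :
    (IsRatHiggs lm tm (α1 lm u) (β1 lm u) (γ1 lm u) ∧
      IsParabolic lm tm (θ1 lm u) (line 1 0) (line 1 1) (line 1 u) (line 1 v) (line 0 1)) ∧
    (IsRatHiggs lm tm (α2 tm v) (β2 tm v) (γ2 tm v) ∧
      IsParabolic lm tm (θ2 tm v) (line 1 0) (line 1 1) (line 1 u) (line 1 v) (line 0 1)) ∧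
    LinearIndependent ℂ ![θ1 lm u, θ2 tm v] ∧
    (∀ a b c : K, IsRatHiggs lm tm a b c →
      IsParabolic lm tm (higgsMat a b c) (line 1 0) (line 1 1) (line 1 u) (line 1 v)
        (line 0 1) →
      ∃! cc : ℂ × ℂ, higgsMat a b c = cc.1 • θ1 lm u + cc.2 • θ2 tm v) := by
  have hH1 : IsRatHiggs lm tm (α1 lm u) (β1 lm u) (γ1 lm u) :=
    ⟨⟨_, deg_pA1 lm tm u, rep_a1 lm tm u⟩, ⟨_, deg_pB1 lm tm u, rep_b1 lm tm u⟩,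
     ⟨_, deg_pC1 lm tm u, rep_c1 lm tm u⟩⟩
  have hH2 : IsRatHiggs lm tm (α2 tm v) (β2 tm v) (γ2 tm v) :=
    ⟨⟨_, deg_pA2 lm tm v, rep_a2 lm tm v⟩, ⟨_, deg_pB2 lm tm v, rep_b2 lm tm v⟩,
     ⟨_, deg_pC2 lm tm v, rep_c2 lm tm v⟩⟩
  have hP1 : IsParabolic lm tm (θ1 lm u) (line 1 0) (line 1 1) (line 1 u) (line 1 v)
      (line 0 1) := by
    rw [show θ1 lm u = higgsMat (α1 lm u) (β1 lm u) (γ1 lm u) from rfl]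
    exact (parab_iff lm tm hl0 hl1 ht0 ht1 hlt u v (rep_a1 lm tm u) (rep_b1 lm tm u)
      (rep_c1 lm tm u)).mpr (conds1 lm tm u v)
  have hP2 : IsParabolic lm tm (θ2 tm v) (line 1 0) (line 1 1) (line 1 u) (line 1 v)
      (line 0 1) := by
    rw [show θ2 tm v = higgsMat (α2 tm v) (β2 tm v) (γ2 tm v) from rfl]
    exact (parab_iff lm tm hl0 hl1 ht0 ht1 hlt u v (rep_a2 lm tm v) (rep_b2 lm tm v)
      (rep_c2 lm tm v)).mpr (conds2 lm tm u v)
  refine ⟨⟨hH1, hP1⟩, ⟨hH2, hP2⟩, li_aux lm tm hl0 hl1 ht0 ht1 hlt u v, ?_⟩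
  rintro a b c ⟨⟨A, hdA, hA⟩, ⟨B, hdB, hB⟩, ⟨C, hdC, hC⟩⟩ hpar
  exact uniq_aux lm tm hl0 hl1 ht0 ht1 hlt u v a b c A B C hdA hdB hdC hA hB hC hpar
end
end

section
/- For all c1, c2 ∈ ℂ one has the identity det(c1·θ1 + c2·θ2) = (h1(c1,c2) + h2(c1,c2)·X)/q in ℂ(X), where h1(c1,c2) := (c1·(1−u) + c2·(1−v))·(c1·t·u·(λ−u) + c2·λ·v·(t−v)) and h2(c1,c2) := (c1·u·(u−1) + c2·v·(v−1))·(c1·(λ−u) + c2·(t−v)). (In particular the determinant of every ℂ-linear combination of θ1 and θ2 is a quadratic differential with at most simple poles on 0, 1, λ, t, ∞.) -/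
noncomputable section

open Polynomial

def h1v (lm tm u v c1 c2 : ℂ) : ℂ :=
  (c1 * (1 - u) + c2 * (1 - v)) * (c1 * tm * u * (lm - u) + c2 * lm * v * (tm - v))

def h2v (lm tm u v c1 c2 : ℂ) : ℂ :=
  (c1 * u * (u - 1) + c2 * v * (v - 1)) * (c1 * (lm - u) + c2 * (tm - v))

lemma sub_ne (p : ℂ) : Xr - Cc p ≠ 0 := by
  have : (Polynomial.X - Polynomial.C p : Polynomial ℂ) ≠ 0 := Polynomial.X_sub_C_ne_zero p
  have h := RatFunc.algebraMap_ne_zero (K := ℂ) this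
  simpa [Xr, Cc, map_sub, RatFunc.algebraMap_X, RatFunc.algebraMap_C] using h

lemma toK_q (lm tm : ℂ) :
    toK (q lm tm) = Xr * (Xr - Cc 1) * (Xr - Cc lm) * (Xr - Cc tm) := by
  simp [toK, q, Xr, Cc, map_mul, map_sub, RatFunc.algebraMap_X, RatFunc.algebraMap_C]

set_option maxHeartbeats 1000000 in
/-- det(c1·θ1 + c2·θ2) = (h1 + h2·X)/q in ℂ(X). -/
theorem stmt1 (lm tm : ℂ) (hl0 : lm ≠ 0) (hl1 : lm ≠ 1) (ht0 : tm ≠ 0) (ht1 : tm ≠ 1)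
    (hlt : lm ≠ tm) (u v : ℂ) :
    ∀ c1 c2 : ℂ,
      Matrix.det (c1 • θ1 lm u + c2 • θ2 tm v) =
        (Cc (h1v lm tm u v c1 c2) + Cc (h2v lm tm u v c1 c2) * Xr) / toK (q lm tm) := by
  intro c1 c2
  have h0 : (RatFunc.X : K) ≠ 0 := by
    have := sub_ne 0; simpa [Cc, Xr, map_zero] using this
  have h1 : (RatFunc.X : K) - 1 ≠ 0 := by
    have := sub_ne 1; simpa [Cc, Xr, map_one] using this
  have hlm : (RatFunc.X : K) - RatFunc.C lm ≠ 0 := sub_ne lm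
  have htm : (RatFunc.X : K) - RatFunc.C tm ≠ 0 := sub_ne tm
  have hq : ((RatFunc.X : K) * (RatFunc.X - 1) * (RatFunc.X - RatFunc.C lm) *
      (RatFunc.X - RatFunc.C tm)) ≠ 0 :=
    mul_ne_zero (mul_ne_zero (mul_ne_zero h0 h1) hlm) htm
  set Y : K := RatFunc.X with hY
  set L : K := RatFunc.C lm with hL
  set T : K := RatFunc.C tm with hT
  set U : K := RatFunc.C u with hU
  set V : K := RatFunc.C v with hV
  set C1 : K := RatFunc.C c1 with hC1
  set C2 : K := RatFunc.C c2 with hC2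
  set Q : K := Y * (Y - 1) * (Y - L) * (Y - T) with hQdef
  set a : K := C1 * α1 lm u + C2 * α2 tm v with hadef
  set b : K := C1 * β1 lm u + C2 * β2 tm v with hbdef
  set c : K := C1 * γ1 lm u + C2 * γ2 tm v with hcdef
  have hdet : Matrix.det (c1 • θ1 lm u + c2 • θ2 tm v) = -(a * a) - b * c := by
    rw [hadef, hbdef, hcdef]
    simp only [θ1, θ2, higgsMat, Matrix.det_fin_two, Matrix.add_apply, Matrix.smul_apply,
      Matrix.cons_val', Matrix.cons_val_zero, Matrix.cons_val_one, Matrix.head_cons,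
      Matrix.head_fin_const, Matrix.empty_val', Matrix.cons_val_fin_one, Matrix.of_apply,
      RatFunc.smul_eq_C_mul, ← hC1, ← hC2]
    ring
  have ha : Q * a = C1 * (U * Y * (Y - 1) * (Y - T) - U * Y * (Y - L) * (Y - T))
            + C2 * (V * Y * (Y - 1) * (Y - L) - V * Y * (Y - L) * (Y - T)) := by
    rw [hadef, hQdef, α1, α2, frac, frac, frac, frac]
    simp only [Cc, Xr, map_pow, map_one, map_zero, sub_zero, ← hY, ← hL, ← hT, ← hU, ← hV]
    field_simp
  have hb : Q * b = C1 * (U * Y * (Y - L) * (Y - T) - Y * (Y - 1) * (Y - T)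
                + (1 - U) * (Y - 1) * (Y - L) * (Y - T))
            + C2 * (V * Y * (Y - L) * (Y - T) - Y * (Y - 1) * (Y - L)
                + (1 - V) * (Y - 1) * (Y - L) * (Y - T)) := by
    rw [hbdef, hQdef, β1, β2, frac, frac, frac, frac, frac, frac]
    simp only [Cc, Xr, map_sub, map_one, map_zero, sub_zero, ← hY, ← hL, ← hT, ← hU, ← hV]
    field_simp
  have hc : Q * c = C1 * (U ^ 2 * Y * (Y - 1) * (Y - T) - U * Y * (Y - L) * (Y - T))
            + C2 * (V ^ 2 * Y * (Y - 1) * (Y - L) - V * Y * (Y - L) * (Y - T)) := by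
    rw [hcdef, hQdef, γ1, γ2, frac, frac, frac, frac]
    simp only [Cc, Xr, map_pow, map_one, map_zero, sub_zero, ← hY, ← hL, ← hT, ← hU, ← hV]
    field_simp
  have hQid : toK (q lm tm) = Q := by
    rw [toK_q, hQdef]
    simp only [Cc, Xr, map_one, ← hY, ← hL, ← hT]
  have hH1 : Cc (h1v lm tm u v c1 c2) =
      (C1 * (1 - U) + C2 * (1 - V)) * (C1 * T * U * (L - U) + C2 * L * V * (T - V)) := by
    rw [h1v]
    simp only [Cc, map_add, map_mul, map_sub, map_one, ← hL, ← hT, ← hU, ← hV, ← hC1, ← hC2]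
  have hH2 : Cc (h2v lm tm u v c1 c2) =
      (C1 * U * (U - 1) + C2 * V * (V - 1)) * (C1 * (L - U) + C2 * (T - V)) := by
    rw [h2v]
    simp only [Cc, map_add, map_mul, map_sub, map_one, ← hL, ← hT, ← hU, ← hV, ← hC1, ← hC2]
  rw [hdet, hQid, eq_div_iff (hQdef ▸ hq)]
  apply mul_right_cancel₀ (b := Q) (hQdef ▸ hq)
  calc (-(a * a) - b * c) * Q * Q = -((Q * a) * (Q * a)) - (Q * b) * (Q * c) := by ring
    _ = (Cc (h1v lm tm u v c1 c2) + Cc (h2v lm tm u v c1 c2) * Y) * Q := by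
        rw [ha, hb, hc, hH1, hH2, hQdef]
        ring
end
end

section
/- Let u, v, λ, t ∈ ℂ be arbitrary. There exists a pair (c1, c2) ∈ ℂ × ℂ with (c1, c2) ≠ (0, 0) such that h1(c1,c2) = 0 and h2(c1,c2) = 0 if and only if at least one of the following four equations holds: (v−1)(u−1)(u−v) = 0, or (t−v)(λ−u)(λ·v − t·u) = 0, or u·(t−1) + v·(1−λ) + λ − t = 0, or u·v·(u·t·(λ−1) + v·λ·(1−t) + u·v·(t−λ)) = 0. -/
noncomputable section

lemma det_of_common (a b a' b' c1 c2 : ℂ) (hc : ¬ (c1 = 0 ∧ c2 = 0))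
    (h : c1 * a + c2 * b = 0) (h' : c1 * a' + c2 * b' = 0) :
    a * b' - a' * b = 0 := by
  have h1 : (a * b' - a' * b) * c1 = 0 := by linear_combination b' * h - b * h'
  have h2 : (a * b' - a' * b) * c2 = 0 := by linear_combination a * h' - a' * h
  rcases mul_eq_zero.mp h1 with hd | hc1
  · exact hd
  rcases mul_eq_zero.mp h2 with hd | hc2
  · exact hd
  exact absurd ⟨hc1, hc2⟩ hc

lemma common_of_det (a b a' b' : ℂ) (h : a * b' - a' * b = 0) :
    ∃ c : ℂ × ℂ, c ≠ 0 ∧ c.1 * a + c.2 * b = 0 ∧ c.1 * a' + c.2 * b' = 0 := by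
  by_cases hab : a = 0 ∧ b = 0
  · by_cases hab' : a' = 0 ∧ b' = 0
    · exact ⟨(1, 0), by simp [Prod.ext_iff], by simp [hab.1, hab.2], by simp [hab'.1, hab'.2]⟩
    · refine ⟨(b', -a'), ?_, ?_, ?_⟩
      · simp only [ne_eq, Prod.ext_iff, Prod.fst_zero, Prod.snd_zero, neg_eq_zero, not_and]
        intro hb' ha'; exact hab' ⟨ha', hb'⟩
      · simp [hab.1, hab.2]
      · ring
  · refine ⟨(b, -a), ?_, by ring, by linear_combination -h⟩
    simp only [ne_eq, Prod.ext_iff, Prod.fst_zero, Prod.snd_zero, neg_eq_zero, not_and]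
    intro hb ha; exact hab ⟨ha, hb⟩

/-- the two quadrics h1, h2 have a common nontrivial zero (c1,c2) iff one of
the four degeneracy equations holds. -/
theorem stmt2 (u v lm tm : ℂ) :
    (∃ c : ℂ × ℂ, c ≠ 0 ∧ h1v lm tm u v c.1 c.2 = 0 ∧ h2v lm tm u v c.1 c.2 = 0) ↔
      ((v - 1) * (u - 1) * (u - v) = 0 ∨
        (tm - v) * (lm - u) * (lm * v - tm * u) = 0 ∨
        u * (tm - 1) + v * (1 - lm) + lm - tm = 0 ∨
        u * v * (u * tm * (lm - 1) + v * lm * (1 - tm) + u * v * (tm - lm)) = 0) := by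
  constructor
  · rintro ⟨⟨c1, c2⟩, hc, h1, h2⟩
    have hc' : ¬ (c1 = 0 ∧ c2 = 0) := by
      intro ⟨e1, e2⟩; exact hc (by simp [Prod.ext_iff, e1, e2])
    rw [h1v, mul_eq_zero] at h1
    rw [h2v, mul_eq_zero] at h2
    rcases h1 with h1 | h1 <;> rcases h2 with h2 | h2
    · -- L1, L2
      left
      have := det_of_common (1 - u) (1 - v) (u * (u - 1)) (v * (v - 1)) c1 c2 hc'
        (by linear_combination h1) (by linear_combination h2)
      linear_combination this
    · -- L1, Q2
      right; right; left
      have := det_of_common (1 - u) (1 - v) (lm - u) (tm - v) c1 c2 hc'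
        (by linear_combination h1) (by linear_combination h2)
      linear_combination -this
    · -- Q1, L2
      right; right; right
      have := det_of_common (tm * u * (lm - u)) (lm * v * (tm - v))
        (u * (u - 1)) (v * (v - 1)) c1 c2 hc'
        (by linear_combination h1) (by linear_combination h2)
      linear_combination -this
    · -- Q1, Q2
      right; left
      have := det_of_common (tm * u * (lm - u)) (lm * v * (tm - v))
        (lm - u) (tm - v) c1 c2 hc'
        (by linear_combination h1) (by linear_combination h2)
      linear_combination -this
  · rintro (h | h | h | h)
    · obtain ⟨c, hc, e1, e2⟩ := common_of_det (1 - u) (1 - v) (u * (u - 1)) (v * (v - 1))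
        (by linear_combination h)
      exact ⟨c, hc, by rw [h1v]; apply mul_eq_zero.mpr; left; linear_combination e1,
        by rw [h2v]; apply mul_eq_zero.mpr; left; linear_combination e2⟩
    · obtain ⟨c, hc, e1, e2⟩ := common_of_det (tm * u * (lm - u)) (lm * v * (tm - v))
        (lm - u) (tm - v) (by linear_combination -h)
      exact ⟨c, hc, by rw [h1v]; apply mul_eq_zero.mpr; right; linear_combination e1,
        by rw [h2v]; apply mul_eq_zero.mpr; right; linear_combination e2⟩
    · obtain ⟨c, hc, e1, e2⟩ := common_of_det (1 - u) (1 - v) (lm - u) (tm - v)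
        (by linear_combination -h)
      exact ⟨c, hc, by rw [h1v]; apply mul_eq_zero.mpr; left; linear_combination e1,
        by rw [h2v]; apply mul_eq_zero.mpr; right; linear_combination e2⟩
    · obtain ⟨c, hc, e1, e2⟩ := common_of_det (tm * u * (lm - u)) (lm * v * (tm - v))
        (u * (u - 1)) (v * (v - 1)) (by linear_combination -h)
      exact ⟨c, hc, by rw [h1v]; apply mul_eq_zero.mpr; right; linear_combination e1,
        by rw [h2v]; apply mul_eq_zero.mpr; left; linear_combination e2⟩
end
end

section
/- Let u, v ∈ ℂ. There exists a pair (c1, c2) ∈ ℂ × ℂ with (c1, c2) ≠ (0, 0) such that det(c1·θ1 + c2·θ2) = 0 in ℂ(X) if and only if at least one of the following four equations holds: (v−1)(u−1)(u−v) = 0, or (t−v)(λ−u)(λ·v − t·u) = 0, or u·(t−1) + v·(1−λ) + λ − t = 0, or u·v·(u·t·(λ−1) + v·λ·(1−t) + u·v·(t−λ)) = 0. -/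
noncomputable section

open Polynomial

-- AUX SECTION (to be inserted before stmt3)
lemma toK_X : toK Polynomial.X = Xr := rfl
lemma toK_C (a : ℂ) : toK (Polynomial.C a) = Cc a := rfl
lemma toK_ne {p : Polynomial ℂ} (hp : p ≠ 0) : toK p ≠ 0 := RatFunc.algebraMap_ne_zero hp

lemma Xr_sub_ne (a : ℂ) : Xr - Cc a ≠ 0 := by
  have h : Xr - Cc a = toK (Polynomial.X - Polynomial.C a) := by
    simp [toK, Xr, Cc, map_sub, RatFunc.algebraMap_X, RatFunc.algebraMap_C]
  rw [h]
  exact toK_ne (Polynomial.X_sub_C_ne_zero a)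

lemma q_ne (lm tm : ℂ) : q lm tm ≠ 0 := by
  refine mul_ne_zero (mul_ne_zero (mul_ne_zero ?_ ?_) ?_) ?_
  · exact Polynomial.X_ne_zero
  all_goals exact Polynomial.X_sub_C_ne_zero _

lemma smulK (c : ℂ) (x : K) : c • x = Cc c * x := RatFunc.smul_eq_C_mul c x

lemma q_frac (lm tm a p : ℂ) (r : Polynomial ℂ)
    (h : (Polynomial.X - Polynomial.C p) * r = q lm tm) :
    toK (q lm tm) * frac a p = toK (Polynomial.C a * r) := by
  rw [← h, frac, map_mul, map_mul, map_sub, toK_X, toK_C, toK_C]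
  rw [mul_comm (Xr - Cc p) (toK r), mul_assoc, mul_div_cancel₀ _ (Xr_sub_ne p)]
  ring

lemma det_higgs (c d : ℂ) (a b g a' b' g' : K) :
    Matrix.det (c • higgsMat a b g + d • higgsMat a' b' g')
      = -((c • a + d • a')^2 + (c • b + d • b') * (c • g + d • g')) := by
  simp [higgsMat, Matrix.det_fin_two, smulK]
  ring

/-- quotient polynomials q/(X - p) -/
def r0 (lm tm : ℂ) : Polynomial ℂ :=
  (Polynomial.X - Polynomial.C 1) * (Polynomial.X - Polynomial.C lm) *
    (Polynomial.X - Polynomial.C tm)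
def r1 (lm tm : ℂ) : Polynomial ℂ :=
  Polynomial.X * (Polynomial.X - Polynomial.C lm) * (Polynomial.X - Polynomial.C tm)
def rl (lm tm : ℂ) : Polynomial ℂ :=
  Polynomial.X * (Polynomial.X - Polynomial.C 1) * (Polynomial.X - Polynomial.C tm)
def rt (lm tm : ℂ) : Polynomial ℂ :=
  Polynomial.X * (Polynomial.X - Polynomial.C 1) * (Polynomial.X - Polynomial.C lm)

def A1p (lm tm u : ℂ) : Polynomial ℂ := Polynomial.C u * rl lm tm - Polynomial.C u * r1 lm tm
def B1p (lm tm u : ℂ) : Polynomial ℂ :=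
  Polynomial.C u * r1 lm tm - Polynomial.C 1 * rl lm tm + Polynomial.C (1 - u) * r0 lm tm
def G1p (lm tm u : ℂ) : Polynomial ℂ :=
  Polynomial.C (u ^ 2) * rl lm tm - Polynomial.C u * r1 lm tm
def A2p (lm tm v : ℂ) : Polynomial ℂ := Polynomial.C v * rt lm tm - Polynomial.C v * r1 lm tm
def B2p (lm tm v : ℂ) : Polynomial ℂ :=
  Polynomial.C v * r1 lm tm - Polynomial.C 1 * rt lm tm + Polynomial.C (1 - v) * r0 lm tm
def G2p (lm tm v : ℂ) : Polynomial ℂ :=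
  Polynomial.C (v ^ 2) * rt lm tm - Polynomial.C v * r1 lm tm

lemma q_a1 (lm tm u : ℂ) : toK (q lm tm) * α1 lm u = toK (A1p lm tm u) := by
  rw [α1, mul_sub, q_frac lm tm u lm (rl lm tm) (by simp only [q, rl]; ring),
    q_frac lm tm u 1 (r1 lm tm) (by simp only [q, r1]; ring), ← map_sub, A1p]

lemma q_b1 (lm tm u : ℂ) : toK (q lm tm) * β1 lm u = toK (B1p lm tm u) := by
  rw [β1, mul_add, mul_sub, q_frac lm tm u 1 (r1 lm tm) (by simp only [q, r1]; ring),
    q_frac lm tm 1 lm (rl lm tm) (by simp only [q, rl]; ring),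
    q_frac lm tm (1 - u) 0 (r0 lm tm) (by simp only [q, r0, Polynomial.C_0]; ring),
    ← map_sub, ← map_add, B1p]

lemma q_g1 (lm tm u : ℂ) : toK (q lm tm) * γ1 lm u = toK (G1p lm tm u) := by
  rw [γ1, mul_sub, q_frac lm tm (u ^ 2) lm (rl lm tm) (by simp only [q, rl]; ring),
    q_frac lm tm u 1 (r1 lm tm) (by simp only [q, r1]; ring), ← map_sub, G1p]

lemma q_a2 (lm tm v : ℂ) : toK (q lm tm) * α2 tm v = toK (A2p lm tm v) := by
  rw [α2, mul_sub, q_frac lm tm v tm (rt lm tm) (by simp only [q, rt]; ring),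
    q_frac lm tm v 1 (r1 lm tm) (by simp only [q, r1]; ring), ← map_sub, A2p]

lemma q_b2 (lm tm v : ℂ) : toK (q lm tm) * β2 tm v = toK (B2p lm tm v) := by
  rw [β2, mul_add, mul_sub, q_frac lm tm v 1 (r1 lm tm) (by simp only [q, r1]; ring),
    q_frac lm tm 1 tm (rt lm tm) (by simp only [q, rt]; ring),
    q_frac lm tm (1 - v) 0 (r0 lm tm) (by simp only [q, r0, Polynomial.C_0]; ring),
    ← map_sub, ← map_add, B2p]

lemma q_g2 (lm tm v : ℂ) : toK (q lm tm) * γ2 tm v = toK (G2p lm tm v) := by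
  rw [γ2, mul_sub, q_frac lm tm (v ^ 2) tm (rt lm tm) (by simp only [q, rt]; ring),
    q_frac lm tm v 1 (r1 lm tm) (by simp only [q, r1]; ring), ← map_sub, G2p]

/-- the coefficients of the two binary quadratics -/
def e1coef (lm tm u v c d : ℂ) : ℂ :=
  c ^ 2 * (u * (u - 1) * (u - lm)) +
    c * d * (u * v * (u + v - 2) + tm * u * (1 - u) + lm * v * (1 - v)) +
    d ^ 2 * (v * (v - 1) * (v - tm))
def e0coef (lm tm u v c d : ℂ) : ℂ :=
  c ^ 2 * (-(tm * u * (u - 1) * (u - lm))) +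
    c * d * (tm * u ^ 2 * (1 - v) + lm * v ^ 2 * (1 - u) - lm * tm * (u + v - 2 * u * v)) +
    d ^ 2 * (-(lm * v * (v - 1) * (v - tm)))

lemma poly_key (lm tm u v c d : ℂ) :
    -((Polynomial.C c * A1p lm tm u + Polynomial.C d * A2p lm tm v) ^ 2 +
        (Polynomial.C c * B1p lm tm u + Polynomial.C d * B2p lm tm v) *
          (Polynomial.C c * G1p lm tm u + Polynomial.C d * G2p lm tm v)) =
      -(Polynomial.C (e1coef lm tm u v c d) * Polynomial.X +
          Polynomial.C (e0coef lm tm u v c d)) * q lm tm := by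
  simp only [A1p, B1p, G1p, A2p, B2p, G2p, r0, r1, rl, rt, q, e1coef, e0coef,
    map_add, map_sub, map_mul, map_pow, map_neg, map_one, map_ofNat]
  ring

lemma det_key (lm tm u v c d : ℂ) :
    Matrix.det (c • θ1 lm u + d • θ2 tm v) * toK (q lm tm) =
      -(Cc (e1coef lm tm u v c d) * Xr + Cc (e0coef lm tm u v c d)) := by
  have qa1 := q_a1 lm tm u; have qb1 := q_b1 lm tm u; have qg1 := q_g1 lm tm u
  have qa2 := q_a2 lm tm v; have qb2 := q_b2 lm tm v; have qg2 := q_g2 lm tm v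
  have hdet := det_higgs c d (α1 lm u) (β1 lm u) (γ1 lm u) (α2 tm v) (β2 tm v) (γ2 tm v)
  have ha : toK (q lm tm) * (c • α1 lm u + d • α2 tm v)
      = toK (Polynomial.C c * A1p lm tm u + Polynomial.C d * A2p lm tm v) := by
    calc toK (q lm tm) * (c • α1 lm u + d • α2 tm v)
        = Cc c * (toK (q lm tm) * α1 lm u) + Cc d * (toK (q lm tm) * α2 tm v) := by
          rw [smulK, smulK]; ring
      _ = _ := by rw [qa1, qa2, map_add, map_mul, map_mul, toK_C, toK_C]
  have hb : toK (q lm tm) * (c • β1 lm u + d • β2 tm v)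
      = toK (Polynomial.C c * B1p lm tm u + Polynomial.C d * B2p lm tm v) := by
    calc toK (q lm tm) * (c • β1 lm u + d • β2 tm v)
        = Cc c * (toK (q lm tm) * β1 lm u) + Cc d * (toK (q lm tm) * β2 tm v) := by
          rw [smulK, smulK]; ring
      _ = _ := by rw [qb1, qb2, map_add, map_mul, map_mul, toK_C, toK_C]
  have hg : toK (q lm tm) * (c • γ1 lm u + d • γ2 tm v)
      = toK (Polynomial.C c * G1p lm tm u + Polynomial.C d * G2p lm tm v) := by
    calc toK (q lm tm) * (c • γ1 lm u + d • γ2 tm v)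
        = Cc c * (toK (q lm tm) * γ1 lm u) + Cc d * (toK (q lm tm) * γ2 tm v) := by
          rw [smulK, smulK]; ring
      _ = _ := by rw [qg1, qg2, map_add, map_mul, map_mul, toK_C, toK_C]
  have big : Matrix.det (c • θ1 lm u + d • θ2 tm v) * toK (q lm tm) * toK (q lm tm) =
      -(Cc (e1coef lm tm u v c d) * Xr + Cc (e0coef lm tm u v c d)) * toK (q lm tm) := by
    have step1 : Matrix.det (c • θ1 lm u + d • θ2 tm v) * toK (q lm tm) * toK (q lm tm) =
        -((toK (q lm tm) * (c • α1 lm u + d • α2 tm v)) ^ 2 +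
          (toK (q lm tm) * (c • β1 lm u + d • β2 tm v)) *
            (toK (q lm tm) * (c • γ1 lm u + d • γ2 tm v))) := by
      rw [θ1, θ2, hdet]; ring
    rw [step1, ha, hb, hg, ← map_pow, ← map_mul, ← map_add, ← map_neg, poly_key,
      map_mul, map_neg, map_add, map_mul, toK_C, toK_X, toK_C]
  exact mul_right_cancel₀ (toK_ne (q_ne lm tm)) big

lemma det_zero_iff (lm tm u v c d : ℂ) :
    Matrix.det (c • θ1 lm u + d • θ2 tm v) = 0 ↔
      e1coef lm tm u v c d = 0 ∧ e0coef lm tm u v c d = 0 := by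
  constructor
  · intro h
    have key := det_key lm tm u v c d
    rw [h, zero_mul] at key
    have hp : toK (Polynomial.C (e1coef lm tm u v c d) * Polynomial.X +
        Polynomial.C (e0coef lm tm u v c d)) = 0 := by
      rw [map_add, map_mul, toK_C, toK_X, toK_C]
      linear_combination key
    have hp0 : (Polynomial.C (e1coef lm tm u v c d) * Polynomial.X +
        Polynomial.C (e0coef lm tm u v c d)) = 0 := by
      apply toK_inj; simpa using hp
    constructor
    · have := congrArg (fun p => Polynomial.coeff p 1) hp0
      simpa using this
    · have := congrArg (fun p => Polynomial.coeff p 0) hp0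
      simpa using this
  · rintro ⟨h1, h0⟩
    have key := det_key lm tm u v c d
    rw [h1, h0] at key
    simp only [Cc, map_zero, zero_mul, add_zero, neg_zero] at key
    exact (mul_eq_zero.mp key).resolve_right (toK_ne (q_ne lm tm))

/-- common nonzero root of two binary quadratic forms: one direction via resultant -/
lemma quad_root_of_res (a b c0 A B C : ℂ) (ha : a ≠ 0)
    (hR : (a * C - A * c0) ^ 2 - (a * B - A * b) * (b * C - B * c0) = 0) :
    ∃ s : ℂ, a * s ^ 2 + b * s + c0 = 0 ∧ A * s ^ 2 + B * s + C = 0 := by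
  obtain ⟨w, hw⟩ := IsAlgClosed.exists_pow_nat_eq (k := ℂ) (b ^ 2 - 4 * a * c0) two_pos
  set s1 := (-b + w) / (2 * a) with hs1
  set s2 := (-b - w) / (2 * a) with hs2
  have hb : b = -a * (s1 + s2) := by
    rw [hs1, hs2]; field_simp; ring
  have hc : c0 = a * (s1 * s2) := by
    rw [hs1, hs2]; field_simp
    linear_combination hw
  have key : (a * C - A * c0) ^ 2 - (a * B - A * b) * (b * C - B * c0) =
      a ^ 2 * (A * s1 ^ 2 + B * s1 + C) * (A * s2 ^ 2 + B * s2 + C) := by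
    rw [hb, hc]; ring
  rw [key] at hR
  rcases mul_eq_zero.mp hR with h | h
  · rcases mul_eq_zero.mp h with h' | h'
    · exact absurd (pow_eq_zero_iff two_ne_zero |>.mp h') ha
    · exact ⟨s1, by rw [hb, hc]; ring, h'⟩
  · exact ⟨s2, by rw [hb, hc]; ring, h⟩

lemma quad_common (a b c0 A B C : ℂ) :
    (∃ p : ℂ × ℂ, p ≠ 0 ∧ a * p.1 ^ 2 + b * p.1 * p.2 + c0 * p.2 ^ 2 = 0 ∧
        A * p.1 ^ 2 + B * p.1 * p.2 + C * p.2 ^ 2 = 0) ↔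
      (a * C - A * c0) ^ 2 - (a * B - A * b) * (b * C - B * c0) = 0 := by
  constructor
  · rintro ⟨⟨x, y⟩, hne, h1, h2⟩
    by_cases hy : y = 0
    · subst hy
      have hx : x ≠ 0 := by
        intro hx; exact hne (by simp [hx, Prod.ext_iff])
      have ha : a = 0 := by
        have : a * x ^ 2 = 0 := by linear_combination h1
        rcases mul_eq_zero.mp this with h | h
        · exact h
        · exact absurd (pow_eq_zero_iff two_ne_zero |>.mp h) hx
      have hA : A = 0 := by
        have : A * x ^ 2 = 0 := by linear_combination h2
        rcases mul_eq_zero.mp this with h | h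
        · exact h
        · exact absurd (pow_eq_zero_iff two_ne_zero |>.mp h) hx
      rw [ha, hA]; ring
    · set s := x / y with hs
      have h1' : a * s ^ 2 + b * s + c0 = 0 := by
        rw [hs]; field_simp; linear_combination h1
      have h2' : A * s ^ 2 + B * s + C = 0 := by
        rw [hs]; field_simp; linear_combination h2
      have k1 : (a * B - A * b) * s = A * c0 - a * C := by
        linear_combination a * h2' - A * h1'
      have k2 : s * ((a * C - A * c0) * s + (b * C - B * c0)) = 0 := by
        linear_combination C * h1' - c0 * h2'
      rcases mul_eq_zero.mp k2 with hs0 | hinner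
      · rw [hs0] at h1' h2'
        have hc0 : c0 = 0 := by linear_combination h1'
        have hC : C = 0 := by linear_combination h2'
        rw [hc0, hC]; ring
      · linear_combination (a * C - A * c0) * k1 - (a * B - A * b) * hinner
  · intro hR
    by_cases ha : a = 0
    · by_cases hA : A = 0
      · exact ⟨(1, 0), by simp [Prod.ext_iff], by rw [ha]; ring, by rw [hA]; ring⟩
      · have hR' : (A * c0 - a * C) ^ 2 - (A * b - a * B) * (B * c0 - b * C) = 0 := by
          linear_combination hR
        obtain ⟨s, hG, hF⟩ := quad_root_of_res A B C a b c0 hA hR'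
        exact ⟨(s, 1), by simp [Prod.ext_iff], by linear_combination hF,
          by linear_combination hG⟩
    · obtain ⟨s, hF, hG⟩ := quad_root_of_res a b c0 A B C ha hR
      exact ⟨(s, 1), by simp [Prod.ext_iff], by linear_combination hF,
        by linear_combination hG⟩


/-- there is a nontrivial combination c1·θ1 + c2·θ2 with vanishing
determinant iff one of the four degeneracy equations holds. -/
theorem stmt3 (lm tm : ℂ) (hl0 : lm ≠ 0) (hl1 : lm ≠ 1) (ht0 : tm ≠ 0) (ht1 : tm ≠ 1)
    (hlt : lm ≠ tm) (u v : ℂ) :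
    (∃ c : ℂ × ℂ, c ≠ 0 ∧ Matrix.det (c.1 • θ1 lm u + c.2 • θ2 tm v) = 0) ↔
      ((v - 1) * (u - 1) * (u - v) = 0 ∨
        (tm - v) * (lm - u) * (lm * v - tm * u) = 0 ∨
        u * (tm - 1) + v * (1 - lm) + lm - tm = 0 ∨
        u * v * (u * tm * (lm - 1) + v * lm * (1 - tm) + u * v * (tm - lm)) = 0) := by
  have equiv1 : (∃ c : ℂ × ℂ, c ≠ 0 ∧ Matrix.det (c.1 • θ1 lm u + c.2 • θ2 tm v) = 0) ↔
      (∃ p : ℂ × ℂ, p ≠ 0 ∧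
        (u * (u - 1) * (u - lm)) * p.1 ^ 2 +
          (u * v * (u + v - 2) + tm * u * (1 - u) + lm * v * (1 - v)) * p.1 * p.2 +
          (v * (v - 1) * (v - tm)) * p.2 ^ 2 = 0 ∧
        (-(tm * u * (u - 1) * (u - lm))) * p.1 ^ 2 +
          (tm * u ^ 2 * (1 - v) + lm * v ^ 2 * (1 - u) - lm * tm * (u + v - 2 * u * v)) *
            p.1 * p.2 +
          (-(lm * v * (v - 1) * (v - tm))) * p.2 ^ 2 = 0) := by
    apply exists_congr; intro p
    apply and_congr_right; intro _
    rw [det_zero_iff]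
    unfold e1coef e0coef
    constructor
    · rintro ⟨h1, h0⟩
      exact ⟨by linear_combination h1, by linear_combination h0⟩
    · rintro ⟨h1, h0⟩
      exact ⟨by linear_combination h1, by linear_combination h0⟩
  rw [equiv1, quad_common]
  constructor
  · intro h
    have h4 : ((v - 1) * (u - 1) * (u - v)) * ((tm - v) * (lm - u) * (lm * v - tm * u)) *
        (u * (tm - 1) + v * (1 - lm) + lm - tm) *
        (u * v * (u * tm * (lm - 1) + v * lm * (1 - tm) + u * v * (tm - lm))) = 0 := by
      linear_combination -h
    rcases mul_eq_zero.mp h4 with h123 | hd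
    · rcases mul_eq_zero.mp h123 with h12 | hc
      · rcases mul_eq_zero.mp h12 with h1 | h2
        · exact Or.inl h1
        · exact Or.inr (Or.inl h2)
      · exact Or.inr (Or.inr (Or.inl hc))
    · exact Or.inr (Or.inr (Or.inr hd))
  · intro h
    rcases h with h | h | h | h
    · linear_combination (-(((tm - v) * (lm - u) * (lm * v - tm * u)) *
        (u * (tm - 1) + v * (1 - lm) + lm - tm) *
        (u * v * (u * tm * (lm - 1) + v * lm * (1 - tm) + u * v * (tm - lm))))) * h
    · linear_combination (-(((v - 1) * (u - 1) * (u - v)) *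
        (u * (tm - 1) + v * (1 - lm) + lm - tm) *
        (u * v * (u * tm * (lm - 1) + v * lm * (1 - tm) + u * v * (tm - lm))))) * h
    · linear_combination (-(((v - 1) * (u - 1) * (u - v)) *
        ((tm - v) * (lm - u) * (lm * v - tm * u)) *
        (u * v * (u * tm * (lm - 1) + v * lm * (1 - tm) + u * v * (tm - lm))))) * h
    · linear_combination (-(((v - 1) * (u - 1) * (u - v)) *
        ((tm - v) * (lm - u) * (lm * v - tm * u)) *
        (u * (tm - 1) + v * (1 - lm) + lm - tm))) * h
end
end

section
/- Let u ∈ ℂ. There exist polynomials s1, s2 ∈ ℂ[X] of degree at most 1, not both zero, such that (s1(0), s2(0)) ∈ ℂ·(1,0), (s1(1), s2(1)) ∈ ℂ·(1,1), (s1(λ), s2(λ)) ∈ ℂ·(1,u), and (coefficient of X in s1, coefficient of X in s2) ∈ ℂ·(0,1), if and only if u = λ. (Geometrically: there is an embedding of O(−1) into the trivial rank-two bundle on P¹ passing through the parabolic directions over 0, 1, λ and ∞ exactly when λ − u = 0.) -/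
noncomputable section

open Polynomial

lemma mem_line_iff (a b x y : ℂ) :
    ![x, y] ∈ line a b ↔ ∃ k : ℂ, x = k * a ∧ y = k * b := by
  rw [line, Submodule.mem_span_singleton]
  constructor
  · rintro ⟨k, hk⟩
    exact ⟨k, by simpa using (congrFun hk 0).symm, by simpa using (congrFun hk 1).symm⟩
  · rintro ⟨k, h0, h1⟩
    refine ⟨k, funext fun i => ?_⟩
    fin_cases i <;> simp [h0, h1]

/-- an embedding of O(-1) into O ⊕ O passes through the parabolic
directions over 0, 1, λ and ∞ iff u = λ. -/
theorem stmt5 (lm tm : ℂ) (hl0 : lm ≠ 0) (hl1 : lm ≠ 1) (ht0 : tm ≠ 0) (ht1 : tm ≠ 1)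
    (hlt : lm ≠ tm) (u : ℂ) :
    (∃ s1 s2 : Polynomial ℂ, s1.degree ≤ 1 ∧ s2.degree ≤ 1 ∧ ¬(s1 = 0 ∧ s2 = 0) ∧
      ![s1.eval 0, s2.eval 0] ∈ line 1 0 ∧
      ![s1.eval 1, s2.eval 1] ∈ line 1 1 ∧
      ![s1.eval lm, s2.eval lm] ∈ line 1 u ∧
      ![s1.coeff 1, s2.coeff 1] ∈ line 0 1) ↔ u = lm := by
  constructor
  · rintro ⟨s1, s2, hd1, hd2, hnz, h0, h1, hlm, hinf⟩
    rw [mem_line_iff] at h0 h1 hlm hinf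
    obtain ⟨k0, hk01, hk02⟩ := h0
    obtain ⟨k1, hk11, hk12⟩ := h1
    obtain ⟨kl, hkl1, hkl2⟩ := hlm
    obtain ⟨ki, hki1, hki2⟩ := hinf
    have hs1c : s1.coeff 1 = 0 := by simpa using hki1
    have e1 : s1 = C (s1.coeff 1) * X + C (s1.coeff 0) :=
      Polynomial.eq_X_add_C_of_degree_le_one hd1
    have e2 : s2 = C (s2.coeff 1) * X + C (s2.coeff 0) :=
      Polynomial.eq_X_add_C_of_degree_le_one hd2
    set a := s1.coeff 0
    set b := s2.coeff 1
    set c := s2.coeff 0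
    have ev1 : ∀ x : ℂ, s1.eval x = a := by
      intro x; rw [e1, hs1c]; simp
    have ev2 : ∀ x : ℂ, s2.eval x = b * x + c := by
      intro x; rw [e2]; simp
    have hc : c = 0 := by
      have := hk02; rw [ev2 0] at this; simpa using this
    have ha : a = k1 := by have := hk11; rw [ev1 1] at this; simpa using this
    have hb : b = k1 := by
      have := hk12; rw [ev2 1, hc] at this; simpa using this
    have hkla : kl = a := by have := hkl1; rw [ev1 lm] at this; simpa using this.symm
    have hmain : b * lm = a * u := by
      have := hkl2; rw [ev2 lm, hc, hkla] at this; simpa using this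
    have hba : b = a := hb.trans ha.symm
    have hane : a ≠ 0 := by
      intro h
      apply hnz
      constructor
      · rw [e1, hs1c, h]; simp
      · rw [e2, hba, h, hc]; simp
    rw [hba] at hmain
    exact (mul_left_cancel₀ hane hmain.symm)
  · rintro rfl
    refine ⟨1, X, ?_, Polynomial.degree_X_le, ?_, ?_, ?_, ?_, ?_⟩
    · simpa using Polynomial.degree_one_le
    · simp [Polynomial.coeff_one]
    · rw [mem_line_iff]; exact ⟨1, by simp⟩
    · rw [mem_line_iff]; exact ⟨1, by simp⟩
    · rw [mem_line_iff]; exact ⟨1, by simp⟩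
    · rw [mem_line_iff]; exact ⟨1, by simp [Polynomial.coeff_one]⟩
end
end

section
/- Let u, v ∈ ℂ. There exist polynomials s1, s2 ∈ ℂ[X] of degree at most 1, not both zero, such that (s1(0), s2(0)) ∈ ℂ·(1,0), (s1(λ), s2(λ)) ∈ ℂ·(1,u), (s1(t), s2(t)) ∈ ℂ·(1,v), and (coefficient of X in s1, coefficient of X in s2) ∈ ℂ·(0,1), if and only if t·u = λ·v. (Geometrically: there is an embedding of O(−1) into the trivial rank-two bundle on P¹ passing through the parabolic directions over 0, λ, t and ∞ exactly when λ·v − t·u = 0.) -/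
set_option maxRecDepth 4000


noncomputable section

open Polynomial

/-- an embedding of O(-1) into O ⊕ O passes through the parabolic
directions over 0, λ, t and ∞ iff t·u = λ·v. -/
theorem stmt7 (lm tm : ℂ) (hl0 : lm ≠ 0) (hl1 : lm ≠ 1) (ht0 : tm ≠ 0) (ht1 : tm ≠ 1)
    (hlt : lm ≠ tm) (u v : ℂ) :
    (∃ s1 s2 : Polynomial ℂ, s1.degree ≤ 1 ∧ s2.degree ≤ 1 ∧ ¬(s1 = 0 ∧ s2 = 0) ∧
      ![s1.eval 0, s2.eval 0] ∈ line 1 0 ∧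
      ![s1.eval lm, s2.eval lm] ∈ line 1 u ∧
      ![s1.eval tm, s2.eval tm] ∈ line 1 v ∧
      ![s1.coeff 1, s2.coeff 1] ∈ line 0 1) ↔ tm * u = lm * v := by
  constructor
  · rintro ⟨s1, s2, hd1, hd2, hnz, h0, hl, ht, hinf⟩
    set a := s1.coeff 0 with ha
    set b := s1.coeff 1 with hb
    set c := s2.coeff 0 with hc
    set d := s2.coeff 1 with hdd
    have e1 : s1 = C b * X + C a := Polynomial.eq_X_add_C_of_degree_le_one hd1
    have e2 : s2 = C d * X + C c := Polynomial.eq_X_add_C_of_degree_le_one hd2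
    rw [mem_line_iff] at h0 hl ht hinf
    obtain ⟨k0, hk0a, hk0b⟩ := h0
    obtain ⟨k1, hk1a, hk1b⟩ := hl
    obtain ⟨k2, hk2a, hk2b⟩ := ht
    obtain ⟨k3, hk3a, hk3b⟩ := hinf
    simp only [e1, e2] at hk0a hk0b hk1a hk1b hk2a hk2b hk3a hk3b
    simp only [Polynomial.eval_add, Polynomial.eval_mul, Polynomial.eval_C,
      Polynomial.eval_X, Polynomial.coeff_add, Polynomial.coeff_C_mul, Polynomial.coeff_X_one,
      Polynomial.coeff_C, mul_zero, zero_add, mul_one, add_zero,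
      if_neg (one_ne_zero)] at hk0a hk0b hk1a hk1b hk2a hk2b hk3a hk3b
    -- hk0b : c = 0 (after simp), hk3a : b = 0
    have hc0 : c = 0 := by linear_combination hk0b
    have hb0 : b = 0 := by linear_combination hk3a
    have hd3 : d = k3 := by linear_combination hk3b
    have hA : a = k1 := by linear_combination hk1a - lm * hb0
    have hB : d * lm = k1 * u := by linear_combination hk1b - hc0
    have hC : a = k2 := by linear_combination hk2a - tm * hb0
    have hD : d * tm = k2 * v := by linear_combination hk2b - hc0
    -- so d * lm = a * u, d * tm = a * v
    by_cases haz : a = 0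
    · have hdz : d ≠ 0 := by
        intro hdz
        exact hnz ⟨by rw [e1, hb0, haz]; simp, by rw [e2, hdz, hc0]; simp⟩
      exfalso
      have : d * lm = 0 := by rw [hB, ← hA, haz, zero_mul]
      exact hdz ((mul_eq_zero.mp this).resolve_right hl0)
    · have := mul_left_cancel₀ haz (a := a) (b := tm * u) (c := lm * v) ?_
      · exact this
      · calc a * (tm * u) = tm * (a * u) := by ring
          _ = tm * (d * lm) := by linear_combination tm * u * hA - tm * hB
          _ = lm * (d * tm) := by ring
          _ = lm * (a * v) := by linear_combination lm * hD - lm * v * hC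
          _ = a * (lm * v) := by ring
  · intro h
    refine ⟨C lm, C u * X, ?_, ?_, ?_, ?_, ?_, ?_, ?_⟩
    · exact le_trans Polynomial.degree_C_le (by norm_num)
    · calc (C u * X).degree ≤ (C u).degree + X.degree := Polynomial.degree_mul_le _ _
        _ ≤ 0 + 1 := add_le_add Polynomial.degree_C_le (le_of_eq Polynomial.degree_X)
        _ = 1 := by norm_num
    · rintro ⟨h1, _⟩
      exact hl0 (by simpa using Polynomial.C_eq_zero.mp h1)
    · rw [mem_line_iff]; exact ⟨lm, by simp⟩
    · rw [mem_line_iff]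
      refine ⟨lm, by simp, ?_⟩
      simp only [Polynomial.eval_mul, Polynomial.eval_C, Polynomial.eval_X]
      ring
    · rw [mem_line_iff]
      refine ⟨lm, by simp, ?_⟩
      simp only [Polynomial.eval_mul, Polynomial.eval_C, Polynomial.eval_X]
      linear_combination h
    · rw [mem_line_iff]
      refine ⟨u, by simp, ?_⟩
      rw [Polynomial.coeff_C_mul, Polynomial.coeff_X_one]
end
end

section
/- Let u, v ∈ ℂ. There exist polynomials s1, s2 ∈ ℂ[X] of degree at most 1, not both zero, such that (s1(0), s2(0)) ∈ ℂ·(1,0), (s1(1), s2(1)) ∈ ℂ·(1,1), (s1(λ), s2(λ)) ∈ ℂ·(1,u), and (s1(t), s2(t)) ∈ ℂ·(1,v), if and only if u·t·(λ−1) + v·λ·(1−t) + u·v·(t−λ) = 0. (Geometrically: there is an embedding of O(−1) into the trivial rank-two bundle on P¹ passing through the four parabolic directions over 0, 1, λ and t exactly when ut(λ−1)+vλ(1−t)+uv(t−λ) = 0.) -/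
noncomputable section
open Polynomial

lemma mem_line (w x y : ℂ) : ![x, y] ∈ line 1 w ↔ y = w * x := by
  simp only [line, Submodule.mem_span_singleton]
  constructor
  · rintro ⟨c, hc⟩
    have h0 := congrFun hc 0
    have h1 := congrFun hc 1
    simp at h0 h1
    subst h0
    rw [← h1]; ring
  · intro h
    exact ⟨x, by funext i; fin_cases i <;> simp [h, mul_comm]⟩

/-- an embedding of O(-1) into O ⊕ O passes through the parabolic
directions over 0, 1, λ and t iff ut(λ−1) + vλ(1−t) + uv(t−λ) = 0. -/
theorem stmt9 (lm tm : ℂ) (hl0 : lm ≠ 0) (hl1 : lm ≠ 1) (ht0 : tm ≠ 0) (ht1 : tm ≠ 1)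
    (hlt : lm ≠ tm) (u v : ℂ) :
    (∃ s1 s2 : Polynomial ℂ, s1.degree ≤ 1 ∧ s2.degree ≤ 1 ∧ ¬(s1 = 0 ∧ s2 = 0) ∧
      ![s1.eval 0, s2.eval 0] ∈ line 1 0 ∧
      ![s1.eval 1, s2.eval 1] ∈ line 1 1 ∧
      ![s1.eval lm, s2.eval lm] ∈ line 1 u ∧
      ![s1.eval tm, s2.eval tm] ∈ line 1 v) ↔
      u * tm * (lm - 1) + v * lm * (1 - tm) + u * v * (tm - lm) = 0 := by
  constructor
  · rintro ⟨s1, s2, hd1, hd2, hnz, h0, h1, hL, hT⟩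
    rw [mem_line] at h0 h1 hL hT
    obtain hs1 := Polynomial.eq_X_add_C_of_degree_le_one hd1
    obtain hs2 := Polynomial.eq_X_add_C_of_degree_le_one hd2
    set a := s1.coeff 0
    set b := s1.coeff 1
    set a2 := s2.coeff 0
    set b2 := s2.coeff 1
    rw [hs1, hs2] at h0 h1 hL hT
    simp only [eval_add, eval_mul, eval_C, eval_X, mul_zero, zero_add, mul_one,
      one_mul, zero_mul] at h0 h1 hL hT
    rw [h0] at h1 hL hT
    have hab : ¬ (a = 0 ∧ b = 0) := by
      rintro ⟨hA, hB⟩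
      apply hnz
      refine ⟨by rw [hs1, hA, hB]; simp, ?_⟩
      have hb2 : b2 = 0 := by rw [hA, hB] at h1; simpa using h1
      rw [hs2, h0, hb2]; simp
    have hE1 : a * (u * tm * (lm - 1) + v * lm * (1 - tm) + u * v * (tm - lm)) = 0 := by
      linear_combination (lm * (1 - u)) * (tm * h1 - hT) - (tm * (1 - v)) * (lm * h1 - hL)
    have hE2 : b * (u * tm * (lm - 1) + v * lm * (1 - tm) + u * v * (tm - lm)) = 0 := by
      linear_combination (tm - v) * (lm * h1 - hL) - (lm - u) * (tm * h1 - hT)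
    by_cases hA : a = 0
    · exact (mul_eq_zero.mp hE2).resolve_left fun hB => hab ⟨hA, hB⟩
    · exact (mul_eq_zero.mp hE1).resolve_left hA
  · intro hE
    set a : ℂ := lm * (1 - u) with ha
    set b : ℂ := u - lm with hb
    refine ⟨C b * X + C a, C (a + b) * X, Polynomial.degree_linear_le,
      Polynomial.degree_C_mul_X_le _, ?_, ?_, ?_, ?_, ?_⟩
    · rintro ⟨h1, _⟩
      have hA : a = 0 := by
        have := congrArg (fun p => Polynomial.coeff p 0) h1
        simpa using this
      have hB : b = 0 := by
        have := congrArg (fun p => Polynomial.coeff p 1) h1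
        simpa using this
      have hu : u = lm := by rw [hb] at hB; linear_combination hB
      have hA' : lm * (1 - u) = 0 := ha ▸ hA
      rw [hu] at hA'
      rcases mul_eq_zero.mp hA' with h | h
      · exact hl0 h
      · exact hl1 (by linear_combination -h)
    · rw [mem_line]; simp
    · rw [mem_line]; simp; ring
    · rw [mem_line]; simp; ring
    · rw [mem_line]; simp; linear_combination -hE
end
end

section
/- Let θ = ((α, β), (γ, −α)) be a rational Higgs field such that Res_p(θ)² = 0 for every p ∈ {0, 1, λ, t} and Res_∞(θ)² = 0 (i.e. all residues are nilpotent). Then there exist h0, h1 ∈ ℂ such that det θ = (h0 + h1·X)/q in ℂ(X). (That is, nilpotency of the residues forces det θ to be a quadratic differential with at most simple poles on the divisor 0+1+λ+t+∞, an element of the 2-dimensional space H⁰(P¹, ω_{P¹}^{⊗2}(Λ)).) -/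
noncomputable section

open Polynomial

lemma evalkey (N d : Polynomial ℂ) (p : ℂ) (hd : d.eval p ≠ 0) (r : K)
    (hr : toK d * r = toK N) : evalAt p r = N.eval p / d.eval p := by
  have hd0 : d ≠ 0 := fun h => hd (by simp [h])
  have hdK : toK d ≠ 0 := RatFunc.algebraMap_ne_zero hd0
  have hrform : r = toK N / toK d := by field_simp [← hr]; linear_combination hr
  have hdvd : r.denom ∣ d := by rw [hrform]; exact RatFunc.denom_div_dvd N d
  have hden : r.denom.eval p ≠ 0 := by
    obtain ⟨s, hs⟩ := hdvd
    intro h; apply hd; rw [hs, Polynomial.eval_mul, h, zero_mul]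
  have hdenK : toK r.denom ≠ 0 := RatFunc.algebraMap_ne_zero (RatFunc.denom_ne_zero r)
  have hnum : toK r.num = r * toK r.denom :=
    (div_eq_iff hdenK).mp (RatFunc.num_div_denom r)
  have hkey : d * r.num = N * r.denom := by
    apply RatFunc.algebraMap_injective
    show toK (d * r.num) = toK (N * r.denom)
    rw [map_mul, map_mul, hnum, ← mul_assoc, hr, mul_comm]
  have hkeyev : d.eval p * r.num.eval p = N.eval p * r.denom.eval p := by
    have := congrArg (Polynomial.eval p) hkey
    simpa using this
  have h2 : evalAt p r = r.num.eval p / r.denom.eval p := by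
    simp only [evalAt, RatFunc.eval, Polynomial.eval₂_id]
  rw [h2, div_eq_div_iff hden hd]
  linear_combination hkeyev

lemma det_of_sq_zero (M : Matrix (Fin 2) (Fin 2) ℂ) (h : M ^ 2 = 0) : M.det = 0 := by
  have := congrArg Matrix.det h
  rw [Matrix.det_pow] at this
  simp only [Matrix.det_zero] at this
  exact pow_eq_zero_iff two_ne_zero |>.mp (by simpa using this)

lemma detRes (lm tm p : ℂ) (qp : Polynomial ℂ) (hq : q lm tm = (X - C p) * qp)
    (hqp : qp.eval p ≠ 0) (a b c : K) (A B C' : Polynomial ℂ)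
    (hA : toK (q lm tm) * a = toK A) (hB : toK (q lm tm) * b = toK B)
    (hC : toK (q lm tm) * c = toK C')
    (hnil : resFin p (higgsMat a b c) ^ 2 = 0) :
    A.eval p * A.eval p + B.eval p * C'.eval p = 0 := by
  have hXC : (Xr - Cc p) = toK (X - Polynomial.C p) := by
    simp [Xr, Cc, toK, map_sub, RatFunc.algebraMap_X, RatFunc.algebraMap_C]
  have key : ∀ (r : K) (N : Polynomial ℂ), toK (q lm tm) * r = toK N →
      evalAt p ((Xr - Cc p) * r) = N.eval p / qp.eval p := by
    intro r N h
    apply evalkey N qp p hqp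
    rw [hXC, ← mul_assoc, ← map_mul]
    rw [show qp * (X - Polynomial.C p) = q lm tm by rw [hq]; ring, h]
  have hnA : toK (q lm tm) * (-a) = toK (-A) := by rw [map_neg, ← hA]; ring
  have e00 := key a A hA
  have e01 := key b B hB
  have e10 := key c C' hC
  have e11 := key (-a) (-A) hnA
  have hdet : (resFin p (higgsMat a b c)).det = 0 := det_of_sq_zero _ hnil
  rw [Matrix.det_fin_two] at hdet
  simp only [resFin, Matrix.of_apply, higgsMat, Matrix.cons_val', Matrix.cons_val_zero,
    Matrix.cons_val_one, Matrix.head_cons, Matrix.empty_val', Matrix.cons_val_fin_one,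
    Matrix.head_fin_const] at hdet
  rw [e00, e01, e10, e11] at hdet
  rw [Polynomial.eval_neg] at hdet
  field_simp at hdet
  have he : eval p qp * eval p qp ≠ 0 := mul_ne_zero hqp hqp
  have := mul_left_cancel₀ he (show eval p qp * eval p qp * (eval p A * eval p A + eval p B * eval p C') = eval p qp * eval p qp * 0 by rw [mul_zero]; linear_combination (-(eval p qp * eval p qp)) * hdet)
  simpa using this

lemma detInf (lm tm : ℂ) (a b c : K) (A B C' : Polynomial ℂ)
    (hA : toK (q lm tm) * a = toK A) (hB : toK (q lm tm) * b = toK B)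
    (hC : toK (q lm tm) * c = toK C')
    (hnil : resInf lm tm (higgsMat a b c) ^ 2 = 0) :
    A.coeff 3 * A.coeff 3 + B.coeff 3 * C'.coeff 3 = 0 := by
  have cA : coeff3 lm tm a = A.coeff 3 := by
    rw [coeff3, hA]; rw [show toK A = algebraMap (Polynomial ℂ) K A from rfl,
      RatFunc.num_algebraMap]
  have cB : coeff3 lm tm b = B.coeff 3 := by
    rw [coeff3, hB]; rw [show toK B = algebraMap (Polynomial ℂ) K B from rfl,
      RatFunc.num_algebraMap]
  have cC : coeff3 lm tm c = C'.coeff 3 := by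
    rw [coeff3, hC]; rw [show toK C' = algebraMap (Polynomial ℂ) K C' from rfl,
      RatFunc.num_algebraMap]
  have cnA : coeff3 lm tm (-a) = -(A.coeff 3) := by
    rw [coeff3, mul_neg, hA, ← map_neg]
    rw [show toK (-A) = algebraMap (Polynomial ℂ) K (-A) from rfl, RatFunc.num_algebraMap,
      Polynomial.coeff_neg]
  have hdet : (resInf lm tm (higgsMat a b c)).det = 0 := det_of_sq_zero _ hnil
  rw [resInf, Matrix.det_neg, Matrix.det_fin_two] at hdet
  simp only [Matrix.of_apply, higgsMat, Matrix.cons_val', Matrix.cons_val_zero,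
    Matrix.cons_val_one, Matrix.head_cons, Matrix.empty_val', Matrix.cons_val_fin_one,
    Matrix.head_fin_const, Fintype.card_fin] at hdet
  rw [cA, cB, cC, cnA] at hdet
  have : (-1 : ℂ) ^ 2 = 1 := by norm_num
  rw [this, one_mul] at hdet
  linear_combination -hdet

lemma coeff_mul_33 (f g : Polynomial ℂ) (hf : f.degree ≤ 3) (hg : g.degree ≤ 3) :
    (f * g).coeff 6 = f.coeff 3 * g.coeff 3 := by
  rw [Polynomial.coeff_mul]
  rw [Finset.sum_eq_single ((3 : ℕ), (3 : ℕ))]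
  · intro b hb hne
    rw [Finset.HasAntidiagonal.mem_antidiagonal] at hb
    rcases lt_or_ge 3 b.1 with h | h
    · rw [Polynomial.coeff_eq_zero_of_degree_lt (lt_of_le_of_lt hf (by exact_mod_cast h)),
        zero_mul]
    · have hb2 : b.2 ≠ 3 := fun h3 => hne (Prod.ext_iff.mpr ⟨by omega, h3⟩)
      have h2 : 3 < b.2 := by omega
      rw [Polynomial.coeff_eq_zero_of_degree_lt (lt_of_le_of_lt hg (by exact_mod_cast h2)),
        mul_zero]
  · intro h
    exact absurd (by simp [Finset.HasAntidiagonal.mem_antidiagonal]) h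

/-- if all residues of a rational Higgs field are nilpotent, then its
determinant is of the form (h0 + h1·X)/q. -/
theorem stmt11 (lm tm : ℂ) (hl0 : lm ≠ 0) (hl1 : lm ≠ 1) (ht0 : tm ≠ 0) (ht1 : tm ≠ 1)
    (hlt : lm ≠ tm) (a b c : K) (hH : IsRatHiggs lm tm a b c)
    (h0 : resFin 0 (higgsMat a b c) ^ 2 = 0)
    (h1 : resFin 1 (higgsMat a b c) ^ 2 = 0)
    (hl : resFin lm (higgsMat a b c) ^ 2 = 0)
    (ht : resFin tm (higgsMat a b c) ^ 2 = 0)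
    (hi : resInf lm tm (higgsMat a b c) ^ 2 = 0) :
    ∃ h0 h1 : ℂ, Matrix.det (higgsMat a b c) = (Cc h0 + Cc h1 * Xr) / toK (q lm tm) := by
  obtain ⟨⟨A, hA3, hA⟩, ⟨B, hB3, hB⟩, ⟨C', hC3, hC⟩⟩ := hH
  -- factorizations of q
  have f0 : q lm tm = (X - C (0:ℂ)) * ((X - C 1) * (X - C lm) * (X - C tm)) := by
    simp only [map_zero, sub_zero]; rw [q]; ring
  have f1 : q lm tm = (X - C (1:ℂ)) * (X * (X - C lm) * (X - C tm)) := by rw [q]; ring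
  have fl : q lm tm = (X - C lm) * (X * (X - C 1) * (X - C tm)) := by rw [q]; ring
  have ft : q lm tm = (X - C tm) * (X * (X - C 1) * (X - C lm)) := by rw [q]; ring
  have e0 : ((X - C (1:ℂ)) * (X - C lm) * (X - C tm)).eval 0 ≠ 0 := by
    simp only [eval_mul, eval_sub, eval_X, eval_C]
    exact mul_ne_zero (mul_ne_zero (by norm_num)
      (sub_ne_zero.mpr (Ne.symm hl0))) (sub_ne_zero.mpr (Ne.symm ht0))
  have e1 : ((X : Polynomial ℂ) * (X - C lm) * (X - C tm)).eval 1 ≠ 0 := by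
    simp only [eval_mul, eval_sub, eval_X, eval_C]
    exact mul_ne_zero (mul_ne_zero one_ne_zero
      (sub_ne_zero.mpr (Ne.symm hl1))) (sub_ne_zero.mpr (Ne.symm ht1))
  have el : ((X : Polynomial ℂ) * (X - C 1) * (X - C tm)).eval lm ≠ 0 := by
    simp only [eval_mul, eval_sub, eval_X, eval_C]
    exact mul_ne_zero (mul_ne_zero hl0 (sub_ne_zero.mpr hl1)) (sub_ne_zero.mpr hlt)
  have et : ((X : Polynomial ℂ) * (X - C 1) * (X - C lm)).eval tm ≠ 0 := by
    simp only [eval_mul, eval_sub, eval_X, eval_C]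
    exact mul_ne_zero (mul_ne_zero ht0 (sub_ne_zero.mpr ht1))
      (sub_ne_zero.mpr (Ne.symm hlt))
  have ev0 := detRes lm tm 0 _ f0 e0 a b c A B C' hA hB hC h0
  have ev1 := detRes lm tm 1 _ f1 e1 a b c A B C' hA hB hC h1
  have evl := detRes lm tm lm _ fl el a b c A B C' hA hB hC hl
  have evt := detRes lm tm tm _ ft et a b c A B C' hA hB hC ht
  have evi := detInf lm tm a b c A B C' hA hB hC hi
  set P : Polynomial ℂ := A * A + B * C' with hPdef
  have hroot : ∀ p : ℂ, A.eval p * A.eval p + B.eval p * C'.eval p = 0 → (X - C p) ∣ P := by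
    intro p hp
    rw [dvd_iff_isRoot, IsRoot, hPdef]
    simp only [eval_add, eval_mul]
    exact hp
  have cop : ∀ x y : ℂ, x ≠ y → IsCoprime (X - C x : Polynomial ℂ) (X - C y) :=
    fun x y h => isCoprime_X_sub_C_of_isUnit_sub (sub_ne_zero.mpr h).isUnit
  have d0 := hroot 0 ev0
  have d1 := hroot 1 ev1
  have dl := hroot lm evl
  have dt := hroot tm evt
  have d01 : (X - C (0:ℂ)) * (X - C 1) ∣ P := (cop 0 1 (by norm_num)).mul_dvd d0 d1
  have d012 : (X - C (0:ℂ)) * (X - C 1) * (X - C lm) ∣ P :=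
    (((cop 0 lm (Ne.symm hl0)).mul_left (cop 1 lm (Ne.symm hl1))).mul_dvd d01 dl)
  have dq : q lm tm ∣ P := by
    rw [show q lm tm = (X - C (0:ℂ)) * (X - C 1) * (X - C lm) * (X - C tm) by simp only [map_zero, sub_zero]; rw [q]]
    exact (((cop 0 tm (Ne.symm ht0)).mul_left (cop 1 tm (Ne.symm ht1))).mul_left
      (cop lm tm hlt)).mul_dvd d012 dt
  obtain ⟨g, hg⟩ := dq
  have degq : (q lm tm).degree = 4 := by rw [q]; compute_degree!
  have hq0 : q lm tm ≠ 0 := fun h => by simp [h] at degq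
  have h66 : ∀ f g : Polynomial ℂ, f.degree ≤ 3 → g.degree ≤ 3 → (f * g).degree ≤ 6 := by
    intro f g hf hg
    refine le_trans (degree_mul_le f g) (le_trans (add_le_add hf hg) ?_)
    decide
  have degP6 : P.degree ≤ 6 :=
    le_trans (degree_add_le _ _) (max_le (h66 A A hA3 hA3) (h66 B C' hB3 hC3))
  have coeff6P : P.coeff 6 = 0 := by
    rw [hPdef, coeff_add, coeff_mul_33 A A hA3 hA3, coeff_mul_33 B C' hB3 hC3]
    exact evi
  have degP5 : P.degree ≤ 5 := by
    rw [Polynomial.degree_le_iff_coeff_zero]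
    intro m hm
    have hm' : 5 < m := by exact_mod_cast hm
    by_cases h6 : m = 6
    · subst h6; exact coeff6P
    · exact Polynomial.coeff_eq_zero_of_degree_lt
        (lt_of_le_of_lt degP6 (by exact_mod_cast (by omega : 6 < m)))
  have degg : g.degree ≤ 1 := by
    rw [hg, degree_mul, degq] at degP5
    rw [show (5 : WithBot ℕ) = 4 + 1 by decide] at degP5
    exact (WithBot.add_le_add_iff_left (by decide : (4 : WithBot ℕ) ≠ ⊥)).mp degP5
  have gform := Polynomial.eq_X_add_C_of_degree_le_one degg
  refine ⟨-(g.coeff 0), -(g.coeff 1), ?_⟩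
  have hqK : toK (q lm tm) ≠ 0 := RatFunc.algebraMap_ne_zero hq0
  have hdet : (higgsMat a b c).det = a * -a - b * c := by
    simp [higgsMat, Matrix.det_fin_two]
  rw [hdet, eq_div_iff hqK]
  apply mul_left_cancel₀ hqK
  calc toK (q lm tm) * ((a * -a - b * c) * toK (q lm tm))
      = -((toK (q lm tm) * a) * (toK (q lm tm) * a)) -
        (toK (q lm tm) * b) * (toK (q lm tm) * c) := by ring
    _ = -(toK A * toK A) - toK B * toK C' := by rw [hA, hB, hC]
    _ = toK (-(A * A) - B * C') := by rw [map_sub, map_neg, map_mul, map_mul]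
    _ = toK (q lm tm * (-g)) := by
        rw [show -(A * A) - B * C' = q lm tm * (-g) by linear_combination -hg]
    _ = toK (q lm tm) * toK (-g) := map_mul _ _ _
    _ = toK (q lm tm) * (Cc (-(g.coeff 0)) + Cc (-(g.coeff 1)) * Xr) := by
        congr 1
        rw [show -g = Polynomial.C (-(g.coeff 0)) + Polynomial.C (-(g.coeff 1)) * X by
          simp only [map_neg]; linear_combination -gform]
        rw [map_add, map_mul]
        simp [Cc, Xr, toK, RatFunc.algebraMap_C, RatFunc.algebraMap_X]
end
end

section
/- Suppose l_0 = l_1 = l_λ = l_t = ℂ·(1,0) and l_∞ is an arbitrary line in ℂ². Then every parabolic Higgs field θ = ((α, β), (γ, −α)) for these directions satisfies α = 0 and γ = 0, i.e. θ is strictly upper triangular; in particular det θ = 0 and the constant line ℂ·(1,0) is invariant under θ. (This is the concrete form of the statement that at most three parabolic directions can lie in a common trivial line subbundle for a Higgs bundle with nonzero determinant.) -/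
noncomputable section

open Polynomial

lemma eval2_id_eq (p : ℂ) (f : Polynomial ℂ) :
    Polynomial.eval₂ (RingHom.id ℂ) p f = f.eval p := by
  simp [Polynomial.eval₂_eq_eval_map, Polynomial.map_id]

/-- key residue lemma: if q = (X - C p) * s with s(p) ≠ 0, q * r = pa as rational
functions, and the residue of r at p vanishes, then pa(p) = 0. -/
lemma key_res (p : ℂ) (s : Polynomial ℂ) (hs : s.eval p ≠ 0) (r : K) (pa : Polynomial ℂ)
    (hq : toK ((Polynomial.X - Polynomial.C p) * s) * r = toK pa)
    (h0 : evalAt p ((Xr - Cc p) * r) = 0) : pa.eval p = 0 := by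
  have hsne : s ≠ 0 := fun h => hs (by simp [h])
  have hXp : (Xr - Cc p) = toK (Polynomial.X - Polynomial.C p) := by
    simp only [toK, map_sub, RatFunc.algebraMap_X, RatFunc.algebraMap_C, Xr, Cc]
  set x := (Xr - Cc p) * r with hx
  have hmul : toK s * x = toK pa := by
    rw [hx, hXp, ← mul_assoc, ← map_mul, mul_comm s (Polynomial.X - Polynomial.C p), hq]
  have hs0 : toK s ≠ 0 := RatFunc.algebraMap_ne_zero hsne
  have hxeq : x = toK pa / toK s := by
    field_simp
    linear_combination (norm := ring_nf) hmul
  have hdvd : RatFunc.denom x ∣ s := by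
    rw [hxeq]; exact RatFunc.denom_div_dvd pa s
  have hden : Polynomial.eval₂ (RingHom.id ℂ) p (RatFunc.denom x) ≠ 0 := by
    obtain ⟨u, hu⟩ := hdvd
    rw [eval2_id_eq]
    intro h
    exact hs (by rw [hu, Polynomial.eval_mul, h, zero_mul])
  have hden1 : Polynomial.eval₂ (RingHom.id ℂ) p (RatFunc.denom (toK s)) ≠ 0 := by
    simp [toK, RatFunc.denom_algebraMap]
  have hEmul := RatFunc.eval_mul (f := RingHom.id ℂ) (a := p) hden1 hden
  have hEs : RatFunc.eval (RingHom.id ℂ) p (toK s) = s.eval p := by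
    simp [toK, eval2_id_eq]
  have hEpa : RatFunc.eval (RingHom.id ℂ) p (toK pa) = pa.eval p := by
    simp [toK, eval2_id_eq]
  have : pa.eval p = s.eval p * evalAt p x := by
    rw [← hEpa, ← hmul, hEmul, hEs]; rfl
  rw [this, h0, mul_zero]

/-- the vanishing of the residues at 0, 1, λ, t forces a regular entry to vanish. -/
lemma entry_zero (lm tm : ℂ) (hl0 : lm ≠ 0) (hl1 : lm ≠ 1) (ht0 : tm ≠ 0) (ht1 : tm ≠ 1)
    (hlt : lm ≠ tm) (r : K) (hreg : IsReg lm tm r)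
    (h0 : evalAt 0 ((Xr - Cc 0) * r) = 0) (h1 : evalAt 1 ((Xr - Cc 1) * r) = 0)
    (hl : evalAt lm ((Xr - Cc lm) * r) = 0) (ht : evalAt tm ((Xr - Cc tm) * r) = 0) :
    r = 0 := by
  obtain ⟨pa, hdeg, hq⟩ := hreg
  have e0 : pa.eval 0 = 0 := by
    refine key_res 0 ((Polynomial.X - Polynomial.C 1) * (Polynomial.X - Polynomial.C lm) *
      (Polynomial.X - Polynomial.C tm)) ?_ r pa ?_ h0
    · simp [sub_eq_zero, hl0, ht0]
    · rw [← hq]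
      congr 1
      congr 1
      simp only [Polynomial.C_0, sub_zero]
      unfold q; ring
  have e1 : pa.eval 1 = 0 := by
    refine key_res 1 (Polynomial.X * (Polynomial.X - Polynomial.C lm) *
      (Polynomial.X - Polynomial.C tm)) ?_ r pa ?_ h1
    · simp [sub_eq_zero, Ne.symm hl1, Ne.symm ht1]
    · rw [← hq]; congr 1; congr 1; unfold q; ring
  have el : pa.eval lm = 0 := by
    refine key_res lm (Polynomial.X * (Polynomial.X - Polynomial.C 1) *
      (Polynomial.X - Polynomial.C tm)) ?_ r pa ?_ hl
    · simp [sub_eq_zero, hl0, hl1, hlt]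
    · rw [← hq]; congr 1; congr 1; unfold q; ring
  have et : pa.eval tm = 0 := by
    refine key_res tm (Polynomial.X * (Polynomial.X - Polynomial.C 1) *
      (Polynomial.X - Polynomial.C lm)) ?_ r pa ?_ ht
    · simp [sub_eq_zero, ht0, ht1, Ne.symm hlt]
    · rw [← hq]; congr 1; congr 1; unfold q; ring
  have hpa : pa = 0 := by
    have hcard : ({0, 1, lm, tm} : Finset ℂ).card = 4 := by
      rw [Finset.card_insert_of_notMem (by simp [Ne.symm hl0, Ne.symm ht0]),
        Finset.card_insert_of_notMem (by simp [Ne.symm hl1, Ne.symm ht1]),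
        Finset.card_insert_of_notMem (by simp [hlt]), Finset.card_singleton]
    refine Polynomial.eq_zero_of_degree_lt_of_eval_finset_eq_zero ({0, 1, lm, tm} : Finset ℂ)
      ?_ ?_
    · rw [hcard]
      exact lt_of_le_of_lt hdeg (by norm_num)
    · intro x hx
      simp only [Finset.mem_insert, Finset.mem_singleton] at hx
      rcases hx with rfl | rfl | rfl | rfl <;> assumption
  have hq0 : toK (q lm tm) ≠ 0 := by
    refine RatFunc.algebraMap_ne_zero ?_
    unfold q
    refine mul_ne_zero (mul_ne_zero (mul_ne_zero Polynomial.X_ne_zero ?_) ?_) ?_ <;>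
      exact Polynomial.X_sub_C_ne_zero _
  have : toK (q lm tm) * r = 0 := by rw [hq, hpa, map_zero]
  rcases mul_eq_zero.mp this with h | h
  · exact absurd h hq0
  · exact h

lemma nil_first_col {p : ℂ} {M : Matrix (Fin 2) (Fin 2) K}
    (h : NilOn (resFin p M) (line 1 0)) :
    evalAt p ((Xr - Cc p) * M 0 0) = 0 ∧ evalAt p ((Xr - Cc p) * M 1 0) = 0 := by
  have hmem : (![1, 0] : Fin 2 → ℂ) ∈ line 1 0 := Submodule.mem_span_singleton_self _
  have h0 := h.1 _ hmem
  have h00 := congrFun h0 0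
  have h10 := congrFun h0 1
  simp [Matrix.mulVec, dotProduct, resFin, Fin.sum_univ_two] at h00 h10
  exact ⟨h00, h10⟩

/-- if the four parabolic directions over 0, 1, λ, t all equal ℂ(1,0) and
l_∞ is an arbitrary line, then every parabolic Higgs field is strictly upper triangular;
in particular its determinant vanishes and the line ℂ(1,0) is invariant. -/
theorem stmt12 (lm tm : ℂ) (hl0 : lm ≠ 0) (hl1 : lm ≠ 1) (ht0 : tm ≠ 0) (ht1 : tm ≠ 1)
    (hlt : lm ≠ tm) (w : Fin 2 → ℂ) (hw : w ≠ 0)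
    (a b c : K) (hH : IsRatHiggs lm tm a b c)
    (hP : IsParabolic lm tm (higgsMat a b c) (line 1 0) (line 1 0) (line 1 0) (line 1 0)
      (Submodule.span ℂ {w})) :
    a = 0 ∧ c = 0 ∧ Matrix.det (higgsMat a b c) = 0 ∧
      (higgsMat a b c).mulVec ![1, 0] ∈ Submodule.span K {![(1 : K), 0]} := by
  obtain ⟨hP0, hP1, hPl, hPt, _⟩ := hP
  have c0 := nil_first_col hP0
  have c1 := nil_first_col hP1
  have cl := nil_first_col hPl
  have ct := nil_first_col hPt
  have hM00 : higgsMat a b c 0 0 = a := by simp [higgsMat]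
  have hM10 : higgsMat a b c 1 0 = c := by simp [higgsMat]
  rw [hM00, hM10] at c0 c1 cl ct
  have ha : a = 0 :=
    entry_zero lm tm hl0 hl1 ht0 ht1 hlt a hH.1 c0.1 c1.1 cl.1 ct.1
  have hc : c = 0 :=
    entry_zero lm tm hl0 hl1 ht0 ht1 hlt c hH.2.2 c0.2 c1.2 cl.2 ct.2
  refine ⟨ha, hc, ?_, ?_⟩
  · rw [ha, hc]
    simp [higgsMat, Matrix.det_fin_two_of]
  · rw [ha, hc]
    have : (higgsMat 0 b 0).mulVec ![1, 0] = 0 := by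
      funext i
      fin_cases i <;>
        simp [higgsMat, Matrix.mulVec, dotProduct, Fin.sum_univ_two]
    rw [this]
    exact Submodule.zero_mem _
end
end

section
/- Let l_0 = l_1 = l_λ = ℂ·(1,0) and l_t = l_∞ = ℂ·(0,1). If θ = ((α, β), (γ, −α)) is a parabolic Higgs field for these directions with det θ = 0 and γ ≠ 0, then α = 0, β = 0 and γ = c/(X−t) for some c ∈ ℂ, c ≠ 0. (Up to rescaling there is a unique Higgs field with vanishing determinant on this unstable parabolic bundle whose destabilizing subbundle is not invariant; this is the concrete form of the sixteen fixed Higgs bundles Θ_i outside the zero section.) -/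
noncomputable section

open Polynomial

lemma resid (p : ℂ) (A qp : Polynomial ℂ) (hqp : qp.eval p ≠ 0) (r : K)
    (hr : r * toK qp = toK A) (h0 : evalAt p r = 0) : A.eval p = 0 := by
  have hqp0 : qp ≠ 0 := fun h => hqp (by simp [h])
  have hK : toK qp ≠ 0 := RatFunc.algebraMap_ne_zero hqp0
  have hrd : r = toK A / toK qp := by rw [eq_div_iff hK]; exact hr
  have hdvd : r.denom ∣ qp := by rw [hrd]; exact RatFunc.denom_div_dvd A qp
  have hid : ∀ (d : Polynomial ℂ), Polynomial.eval₂ (RingHom.id ℂ) p d = d.eval p :=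
    fun d => rfl
  have hden : Polynomial.eval₂ (RingHom.id ℂ) p r.denom ≠ 0 := by
    rw [hid]
    obtain ⟨s, hs⟩ := hdvd
    intro h
    exact hqp (by rw [hs, Polynomial.eval_mul, h, zero_mul])
  have hden2 : Polynomial.eval₂ (RingHom.id ℂ) p (toK qp).denom ≠ 0 := by
    rw [show (toK qp).denom = 1 from RatFunc.denom_algebraMap qp]
    simp
  have hmul := RatFunc.eval_mul (f := RingHom.id ℂ) (a := p) hden hden2
  rw [hr] at hmul
  have hA : RatFunc.eval (RingHom.id ℂ) p (toK A) = A.eval p := by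
    rw [toK, RatFunc.eval_algebraMap]
    simp [hid]
  rw [hA] at hmul
  rw [hmul, show RatFunc.eval (RingHom.id ℂ) p r = 0 from h0, zero_mul]

lemma resFin_apply (p : ℂ) (M : Matrix (Fin 2) (Fin 2) K) (i j : Fin 2) :
    resFin p M i j = evalAt p ((Xr - Cc p) * M i j) := rfl

lemma nil10 (R : Matrix (Fin 2) (Fin 2) ℂ) (h : NilOn R (line 1 0)) :
    R 0 0 = 0 ∧ R 1 0 = 0 := by
  have hv := h.1 ![1, 0] (Submodule.mem_span_singleton_self _)
  constructor
  · have := congrFun hv 0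
    simpa [Matrix.mulVec, dotProduct, Fin.sum_univ_two] using this
  · have := congrFun hv 1
    simpa [Matrix.mulVec, dotProduct, Fin.sum_univ_two] using this

lemma nil01 (R : Matrix (Fin 2) (Fin 2) ℂ) (h : NilOn R (line 0 1)) :
    R 0 1 = 0 ∧ R 1 1 = 0 := by
  have hv := h.1 ![0, 1] (Submodule.mem_span_singleton_self _)
  constructor
  · have := congrFun hv 0
    simpa [Matrix.mulVec, dotProduct, Fin.sum_univ_two] using this
  · have := congrFun hv 1
    simpa [Matrix.mulVec, dotProduct, Fin.sum_univ_two] using this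

/-- on the unstable bundle with l₀ = l₁ = l_λ = ℂ(1,0) and
l_t = l_∞ = ℂ(0,1), a parabolic Higgs field with vanishing determinant and γ ≠ 0
satisfies α = 0, β = 0 and γ = c/(X−t) with c ≠ 0. -/
theorem stmt13 (lm tm : ℂ) (hl0 : lm ≠ 0) (hl1 : lm ≠ 1) (ht0 : tm ≠ 0) (ht1 : tm ≠ 1)
    (hlt : lm ≠ tm) (a b c : K) (hH : IsRatHiggs lm tm a b c)
    (hP : IsParabolic lm tm (higgsMat a b c) (line 1 0) (line 1 0) (line 1 0) (line 0 1)
      (line 0 1))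
    (hdet : Matrix.det (higgsMat a b c) = 0) (hc : c ≠ 0) :
    a = 0 ∧ b = 0 ∧ ∃ c0 : ℂ, c0 ≠ 0 ∧ c = Cc c0 / (Xr - Cc tm) := by
  obtain ⟨⟨A, hA3, hAq⟩, ⟨B, hB3, hBq⟩, ⟨P, hP3, hPq⟩⟩ := hH
  obtain ⟨n0, n1, nl, nt, _⟩ := hP
  -- generic residue-vanishing principle
  have key : ∀ (p : ℂ) (qp : Polynomial ℂ), qp.eval p ≠ 0 →
      (Polynomial.X - Polynomial.C p) * qp = q lm tm →
      ∀ (r : K) (D : Polynomial ℂ), toK (q lm tm) * r = toK D →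
      evalAt p ((Xr - Cc p) * r) = 0 → D.eval p = 0 := by
    intro p qp hqp hfac r D hD h0
    refine resid p D qp hqp _ ?_ h0
    have hX : (Xr - Cc p) = toK (Polynomial.X - Polynomial.C p) := by
      simp [Xr, Cc, toK, map_sub, RatFunc.algebraMap_X, RatFunc.algebraMap_C]
    rw [hX, ← hD, ← hfac, map_mul]
    ring
  -- factorizations of q at its four roots
  have f0 : (Polynomial.X - Polynomial.C (0 : ℂ)) *
      ((Polynomial.X - Polynomial.C 1) * (Polynomial.X - Polynomial.C lm) *
        (Polynomial.X - Polynomial.C tm)) = q lm tm := by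
    rw [q]; simp only [map_zero, map_one]; ring
  have f1 : (Polynomial.X - Polynomial.C (1 : ℂ)) *
      (Polynomial.X * (Polynomial.X - Polynomial.C lm) * (Polynomial.X - Polynomial.C tm)) =
        q lm tm := by
    rw [q]; simp only [map_one]; ring
  have fl : (Polynomial.X - Polynomial.C lm) *
      (Polynomial.X * (Polynomial.X - Polynomial.C 1) * (Polynomial.X - Polynomial.C tm)) =
        q lm tm := by
    rw [q]; simp only [map_one]; ring
  have ft : (Polynomial.X - Polynomial.C tm) *
      (Polynomial.X * (Polynomial.X - Polynomial.C 1) * (Polynomial.X - Polynomial.C lm)) =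
        q lm tm := by
    rw [q]; simp only [map_one]; ring
  -- non-vanishing of the cofactors at the respective points
  have e0 : (((Polynomial.X - Polynomial.C 1) * (Polynomial.X - Polynomial.C lm) *
      (Polynomial.X - Polynomial.C tm)).eval (0 : ℂ)) ≠ 0 := by
    simp only [Polynomial.eval_mul, Polynomial.eval_sub, Polynomial.eval_X, Polynomial.eval_C]
    exact mul_ne_zero (mul_ne_zero (sub_ne_zero.mpr (by norm_num))
      (sub_ne_zero.mpr (Ne.symm hl0))) (sub_ne_zero.mpr (Ne.symm ht0))
  have e1 : ((Polynomial.X * (Polynomial.X - Polynomial.C lm) *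
      (Polynomial.X - Polynomial.C tm)).eval (1 : ℂ)) ≠ 0 := by
    simp only [Polynomial.eval_mul, Polynomial.eval_sub, Polynomial.eval_X, Polynomial.eval_C]
    exact mul_ne_zero (mul_ne_zero one_ne_zero (sub_ne_zero.mpr (Ne.symm hl1)))
      (sub_ne_zero.mpr (Ne.symm ht1))
  have el : ((Polynomial.X * (Polynomial.X - Polynomial.C 1) *
      (Polynomial.X - Polynomial.C tm)).eval lm) ≠ 0 := by
    simp only [Polynomial.eval_mul, Polynomial.eval_sub, Polynomial.eval_X, Polynomial.eval_C]
    exact mul_ne_zero (mul_ne_zero hl0 (sub_ne_zero.mpr hl1)) (sub_ne_zero.mpr hlt)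
  have et : ((Polynomial.X * (Polynomial.X - Polynomial.C 1) *
      (Polynomial.X - Polynomial.C lm)).eval tm) ≠ 0 := by
    simp only [Polynomial.eval_mul, Polynomial.eval_sub, Polynomial.eval_X, Polynomial.eval_C]
    exact mul_ne_zero (mul_ne_zero ht0 (sub_ne_zero.mpr ht1)) (sub_ne_zero.mpr (Ne.symm hlt))
  -- residue conditions
  have M00 : (higgsMat a b c) 0 0 = a := by simp [higgsMat]
  have M10 : (higgsMat a b c) 1 0 = c := by simp [higgsMat]
  have M11 : (higgsMat a b c) 1 1 = -a := by simp [higgsMat]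
  have ra0 : evalAt 0 ((Xr - Cc 0) * a) = 0 := by
    have := (nil10 _ n0).1; rwa [resFin_apply, M00] at this
  have ra1 : evalAt 1 ((Xr - Cc 1) * a) = 0 := by
    have := (nil10 _ n1).1; rwa [resFin_apply, M00] at this
  have ral : evalAt lm ((Xr - Cc lm) * a) = 0 := by
    have := (nil10 _ nl).1; rwa [resFin_apply, M00] at this
  have rat : evalAt tm ((Xr - Cc tm) * (-a)) = 0 := by
    have := (nil01 _ nt).2; rwa [resFin_apply, M11] at this
  have rc0 : evalAt 0 ((Xr - Cc 0) * c) = 0 := by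
    have := (nil10 _ n0).2; rwa [resFin_apply, M10] at this
  have rc1 : evalAt 1 ((Xr - Cc 1) * c) = 0 := by
    have := (nil10 _ n1).2; rwa [resFin_apply, M10] at this
  have rcl : evalAt lm ((Xr - Cc lm) * c) = 0 := by
    have := (nil10 _ nl).2; rwa [resFin_apply, M10] at this
  -- evaluations of A vanish at the four points
  have hAneg : toK (q lm tm) * (-a) = toK (-A) := by rw [map_neg, ← hAq]; ring
  have hA0 : A.eval 0 = 0 := key 0 _ e0 f0 a A hAq ra0
  have hA1 : A.eval 1 = 0 := key 1 _ e1 f1 a A hAq ra1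
  have hAl : A.eval lm = 0 := key lm _ el fl a A hAq ral
  have hAt : A.eval tm = 0 := by
    have := key tm _ et ft (-a) (-A) hAneg rat
    simpa using this
  -- hence A = 0 and a = 0
  have hAzero : A = 0 := by
    apply Polynomial.eq_zero_of_natDegree_lt_card_of_eval_eq_zero' A {0, 1, lm, tm}
    · intro i hi
      simp only [Finset.mem_insert, Finset.mem_singleton] at hi
      rcases hi with rfl | rfl | rfl | rfl
      exacts [hA0, hA1, hAl, hAt]
    · have ha : lm ∉ ({tm} : Finset ℂ) := by simp [hlt]
      have hb : (1 : ℂ) ∉ ({lm, tm} : Finset ℂ) := by simp [Ne.symm hl1, Ne.symm ht1]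
      have hc' : (0 : ℂ) ∉ ({1, lm, tm} : Finset ℂ) := by
        simp only [Finset.mem_insert, Finset.mem_singleton]
        push_neg
        exact ⟨by norm_num, Ne.symm hl0, Ne.symm ht0⟩
      rw [Finset.card_insert_of_notMem hc', Finset.card_insert_of_notMem hb,
        Finset.card_insert_of_notMem ha, Finset.card_singleton]
      exact lt_of_le_of_lt (Polynomial.natDegree_le_iff_degree_le.mpr hA3) (by norm_num)
  have hqne : q lm tm ≠ 0 := by
    rw [← f0]
    exact mul_ne_zero (Polynomial.X_sub_C_ne_zero 0)
      (mul_ne_zero (mul_ne_zero (Polynomial.X_sub_C_ne_zero 1) (Polynomial.X_sub_C_ne_zero lm))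
        (Polynomial.X_sub_C_ne_zero tm))
  have hqK : toK (q lm tm) ≠ 0 := RatFunc.algebraMap_ne_zero hqne
  have ha0 : a = 0 := by
    have := hAq
    rw [hAzero, map_zero] at this
    exact (mul_eq_zero.mp this).resolve_left hqK
  -- b = 0 from det = 0
  have hb0 : b = 0 := by
    have hd : a * (-a) - b * c = 0 := by
      rw [← hdet, higgsMat, Matrix.det_fin_two_of]
    rw [ha0] at hd
    simp only [zero_mul, zero_sub, neg_eq_zero] at hd
    exact (mul_eq_zero.mp hd).resolve_right hc
  -- structure of c
  have hPe0 : P.eval 0 = 0 := key 0 _ e0 f0 c P hPq rc0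
  have hPe1 : P.eval 1 = 0 := key 1 _ e1 f1 c P hPq rc1
  have hPel : P.eval lm = 0 := key lm _ el fl c P hPq rcl
  refine ⟨ha0, hb0, ?_⟩
  set g : Polynomial ℂ :=
    Polynomial.X ^ 3 - Polynomial.C (1 + lm) * Polynomial.X ^ 2 +
      Polynomial.C lm * Polynomial.X with hgdef
  have hg3 : g.coeff 3 = 1 := by
    simp [hgdef, Polynomial.coeff_X_pow, Polynomial.coeff_X, Polynomial.coeff_C_mul,
      add_mul, Polynomial.coeff_add]
  have hgeval : ∀ p : ℂ, g.eval p = p ^ 3 - (1 + lm) * p ^ 2 + lm * p := by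
    intro p; simp [hgdef]
  have hE : P - Polynomial.C (P.coeff 3) * g = 0 := by
    apply Polynomial.eq_zero_of_natDegree_lt_card_of_eval_eq_zero' _ {0, 1, lm}
    · intro i hi
      simp only [Finset.mem_insert, Finset.mem_singleton] at hi
      rcases hi with rfl | rfl | rfl <;>
        simp only [Polynomial.eval_sub, Polynomial.eval_mul, Polynomial.eval_C, hgeval,
          hPe0, hPe1, hPel] <;> ring
    · have hb' : (1 : ℂ) ∉ ({lm} : Finset ℂ) := by simp [Ne.symm hl1]
      have hc' : (0 : ℂ) ∉ ({1, lm} : Finset ℂ) := by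
        simp only [Finset.mem_insert, Finset.mem_singleton]
        push_neg
        exact ⟨by norm_num, Ne.symm hl0⟩
      rw [Finset.card_insert_of_notMem hc', Finset.card_insert_of_notMem hb',
        Finset.card_singleton]
      have hdeg : (P - Polynomial.C (P.coeff 3) * g).degree ≤ 2 := by
        rw [Polynomial.degree_le_iff_coeff_zero]
        intro m hm
        have h2 : 2 < m := by exact_mod_cast hm
        rcases Nat.lt_or_ge 3 m with h3 | h3
        · have h3' : (3 : WithBot ℕ) < (m : ℕ) := by exact_mod_cast h3
          have hPm : P.coeff m = 0 :=
            Polynomial.coeff_eq_zero_of_degree_lt (lt_of_le_of_lt hP3 h3')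
          have hgm : g.coeff m = 0 := by
            simp only [hgdef, Polynomial.coeff_X_pow, Polynomial.coeff_X, Polynomial.coeff_C_mul,
              add_mul, Polynomial.coeff_add, Polynomial.coeff_sub]
            split_ifs <;> first | (exfalso; omega) | norm_num
          simp [Polynomial.coeff_sub, Polynomial.coeff_C_mul, hPm, hgm]
        · have hm3 : m = 3 := by omega
          subst hm3
          simp [Polynomial.coeff_sub, Polynomial.coeff_C_mul, hg3]
      exact lt_of_le_of_lt (Polynomial.natDegree_le_iff_degree_le.mpr hdeg) (by norm_num)
  have hPg : P = Polynomial.C (P.coeff 3) * g := by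
    have := sub_eq_zero.mp hE; exact this
  have hk : P.coeff 3 ≠ 0 := by
    intro h
    rw [h, map_zero, zero_mul] at hPg
    rw [hPg, map_zero] at hPq
    exact hc ((mul_eq_zero.mp hPq).resolve_left hqK)
  have hqfac : q lm tm = g * (Polynomial.X - Polynomial.C tm) := by
    rw [q, hgdef]; simp only [map_add, map_one]; ring
  have hgne : g ≠ 0 := fun h => by simp [h] at hg3
  have hXt : toK (Polynomial.X - Polynomial.C tm) ≠ 0 :=
    RatFunc.algebraMap_ne_zero (Polynomial.X_sub_C_ne_zero tm)
  have hXeq : Xr - Cc tm = toK (Polynomial.X - Polynomial.C tm) := by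
    simp [Xr, Cc, toK, map_sub, RatFunc.algebraMap_X, RatFunc.algebraMap_C]
  refine ⟨P.coeff 3, hk, ?_⟩
  rw [hXeq, eq_div_iff hXt]
  have h1 : toK g * (c * toK (Polynomial.X - Polynomial.C tm)) =
      toK g * Cc (P.coeff 3) := by
    have h2 := hPq
    rw [hqfac, hPg, map_mul, map_mul] at h2
    rw [show Cc (P.coeff 3) = toK (Polynomial.C (P.coeff 3)) from
      (RatFunc.algebraMap_C _).symm]
    linear_combination h2
  exact mul_left_cancel₀ (RatFunc.algebraMap_ne_zero hgne) h1
end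
end
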